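/- arXiv:1712.08258 — 3 statements merged into one kernel-verified Lean document; each statement's English description precedes it below -/
import Mathlib

section
/- Every proper nontrivial subgroup of G₈₀ is isomorphic to one of the following groups: ℤ/2, (ℤ/2)², (ℤ/2)³, (ℤ/2)⁴, or ℤ/5. -/
noncomputable section

variable (K : Type) [Field K] [Fintype K]

/-- The subgroup `C` of `Kˣ` consisting of the fifth roots of unity; when `K` has `16`
elements, `Kˣ` is cyclic of order `15` and `C` is its unique subgroup of order `5`. -/
def C : Subgroup Kˣ := rootsOfUnity 5 K

/-- Each unit of `K` acts on the (multiplicatively written) additive group of `K` by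
multiplication, as a group automorphism. -/
def unitAction : Kˣ →* MulAut (Multiplicative K) where
  toFun c := AddEquiv.toMultiplicative (DistribMulAction.toAddAut Kˣ K c)
  map_one' := by ext x; simp
  map_mul' c d := by ext x; simp [mul_smul]

/-- The action of the fifth roots of unity `C` on `(K, +)` by multiplication. -/
def phi : C K →* MulAut (Multiplicative K) := (unitAction K).comp (C K).subtype

/-- The group `G₈₀ = (K, +) ⋊ C`: for `K` a field with `16` elements this is the semidirect
product `(ℤ/2)⁴ ⋊ ℤ/5` of order `80` considered in the paper. -/
abbrev G80 : Type := SemidirectProduct (Multiplicative K) (C K) (phi K)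

/-! ### Auxiliary lemmas -/

lemma char2_of_card16' (hK : Fintype.card K = 16) : (2 : K) = 0 := by
  obtain ⟨n, hp, h⟩ := FiniteField.card K (ringChar K)
  rw [hK] at h
  have hd : ringChar K ∣ 16 := h ▸ dvd_pow_self _ n.2.ne'
  have h2 := hp.two_le
  have h16 : ringChar K ≤ 16 := Nat.le_of_dvd (by norm_num) hd
  have hr : ringChar K = 2 := by
    interval_cases h : (ringChar K) <;> first | rfl | (exfalso; revert hp hd; decide)
  have := ringChar.charP K
  rw [hr] at this
  exact CharP.cast_eq_zero (R := K) (p := 2)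

/-- A finite group of exponent `2` and order `2 ^ r` is isomorphic to `(ℤ/2)^r`. -/
lemma elemAb (G : Type*) [Group G] [Finite G] (h2 : ∀ g : G, g * g = 1) (r : ℕ)
    (hcard : Nat.card G = 2 ^ r) :
    Nonempty (G ≃* (Fin r → Multiplicative (ZMod 2))) := by
  classical
  have hinv : ∀ g : G, g⁻¹ = g := fun g => inv_eq_of_mul_eq_one_right (h2 g)
  letI : CommGroup G :=
    { mul_comm := fun a b => by
        have h := h2 (a * b)
        calc a * b = (a * b)⁻¹ := (inv_eq_of_mul_eq_one_right h).symm
        _ = b⁻¹ * a⁻¹ := mul_inv_rev a b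
        _ = b * a := by rw [hinv, hinv] }
  letI : Module (ZMod 2) (Additive G) := AddCommGroup.zmodModule (by
    intro x
    show (2 : ℕ) • x = 0
    rw [two_smul]
    exact h2 x.toMul)
  haveI : Module.Finite (ZMod 2) (Additive G) := Module.Finite.of_finite
  let b := Module.finBasis (ZMod 2) (Additive G)
  haveI : Fintype (Additive G) := Fintype.ofFinite _
  have hc : Fintype.card (Additive G) =
      2 ^ Module.finrank (ZMod 2) (Additive G) := by
    have := Module.card_eq_pow_finrank (K := ZMod 2) (V := Additive G)
    simpa [ZMod.card] using this
  have hdr : Module.finrank (ZMod 2) (Additive G) = r := by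
    have : Nat.card G = Fintype.card (Additive G) := by
      rw [← Nat.card_eq_fintype_card (α := Additive G)]
      exact Nat.card_congr (Additive.ofMul)
    rw [this, hc] at hcard
    exact (Nat.pow_right_injective (le_refl 2) hcard.symm).symm
  let e1 : Additive G ≃+ (Fin r → ZMod 2) := by
    rw [← hdr]; exact b.equivFun.toAddEquiv
  exact ⟨((MulEquiv.multiplicativeAdditive G).symm.trans
    (AddEquiv.toMultiplicative e1)).trans (MulEquiv.funMultiplicative _ _)⟩

/-- If a nontrivial additive subgroup of a field with `16` elements is stable under
multiplication by an element `c ≠ 1` with `c ^ 5 = 1`, then it is everything. -/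
lemma W_eq_top {K : Type} [Field K] [Fintype K] (hK : Fintype.card K = 16)
    (h2K : (2 : K) = 0) (c : K) (hc5 : c ^ 5 = 1) (hc1 : c ≠ 1)
    (W : AddSubgroup K) (hmul : ∀ w ∈ W, c * w ∈ W)
    {x : K} (hx : x ∈ W) (hx0 : x ≠ 0) : W = ⊤ := by
  classical
  set R := Subring.closure ({c} : Set K) with hR
  have hRW : ∀ r ∈ R, ∀ w ∈ W, r * w ∈ W := by
    intro r hr
    induction hr using Subring.closure_induction with
    | mem y hy =>
      rw [Set.mem_singleton_iff] at hy
      subst hy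
      exact hmul
    | zero => intro w hw; simpa using W.zero_mem
    | one => intro w hw; simpa using hw
    | add a b ha hb iha ihb =>
      intro w hw
      have := W.add_mem (iha w hw) (ihb w hw)
      simpa [add_mul] using this
    | neg a ha iha =>
      intro w hw
      have := W.neg_mem (iha w hw)
      simpa [neg_mul] using this
    | mul a b ha hb iha ihb =>
      intro w hw
      have := iha _ (ihb w hw)
      simpa [mul_assoc] using this
  -- `R` is all of `K`
  haveI : Finite R := Subtype.finite
  letI : Field R := (Finite.isDomain_to_isField R).toField
  haveI : Fintype R := Fintype.ofFinite R
  letI : Module (ZMod 2) R := AddCommGroup.zmodModule (by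
    intro y
    apply Subtype.ext
    show ((2 : ℕ) • y : R).1 = 0
    push_cast [two_smul]
    have : (y:K) + (y:K) = 2 * (y:K) := by ring
    rw [this, h2K, zero_mul])
  have hcR : Fintype.card R = 2 ^ Module.finrank (ZMod 2) R := by
    have := Module.card_eq_pow_finrank (K := ZMod 2) (V := R)
    simpa [ZMod.card] using this
  have hcmem : c ∈ R := Subring.subset_closure (Set.mem_singleton c)
  have hc0 : c ≠ 0 := by
    intro h; rw [h] at hc5; simp at hc5
  set cR : R := ⟨c, hcmem⟩ with hcRdef
  have hcR0 : cR ≠ 0 := fun h => hc0 (congrArg Subtype.val h)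
  set u : Rˣ := Units.mk0 cR hcR0 with hu
  have hu5 : u ^ 5 = 1 := by
    ext
    show ((cR : R) : K) ^ 5 = 1
    exact hc5
  have hu1 : u ≠ 1 := by
    intro h
    apply hc1
    have : (cR : K) = ((1 : R) : K) := by
      rw [show cR = (1 : R) from congrArg Units.val h]
    exact this
  have hord : orderOf u = 5 := by
    have hdvd : orderOf u ∣ 5 := orderOf_dvd_of_pow_eq_one hu5
    rcases (Nat.prime_five).eq_one_or_self_of_dvd _ hdvd with h | h
    · exact absurd (orderOf_eq_one_iff.mp h) hu1
    · exact h
  have h5dvd : (5 : ℕ) ∣ Fintype.card Rˣ := hord ▸ orderOf_dvd_card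
  rw [Fintype.card_units, hcR] at h5dvd
  have hle : Fintype.card R ≤ 16 := by
    rw [← hK]
    exact Fintype.card_le_of_injective _ Subtype.val_injective
  have hle' : 2 ^ Module.finrank (ZMod 2) R ≤ 16 := hcR ▸ hle
  have hrle : Module.finrank (ZMod 2) R ≤ 4 := by
    by_contra h
    push_neg at h
    have h32 : 2 ^ 5 ≤ 2 ^ Module.finrank (ZMod 2) R := Nat.pow_le_pow_right (by norm_num) h
    norm_num at h32
    omega
  have hnt : 1 < Fintype.card R := Fintype.one_lt_card
  have hge1 : 1 ≤ Module.finrank (ZMod 2) R := by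
    by_contra h
    push_neg at h
    interval_cases h' : (Module.finrank (ZMod 2) R)
    · rw [hcR] at hnt; norm_num at hnt
  have hr4 : Module.finrank (ZMod 2) R = 4 := by
    interval_cases h : (Module.finrank (ZMod 2) R) <;> revert h5dvd <;> decide
  have hcard16 : Fintype.card R = 16 := by rw [hcR, hr4]; norm_num
  have hsurj : Function.Surjective (Subtype.val : R → K) := by
    have := (Fintype.bijective_iff_injective_and_card (Subtype.val : R → K)).mpr
      ⟨Subtype.val_injective, by rw [hcard16, hK]⟩
    exact this.2
  ext y
  simp only [AddSubgroup.mem_top, iff_true]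
  obtain ⟨⟨v, hv⟩, hval⟩ := hsurj (y * x⁻¹)
  have : v * x ∈ W := hRW v hv x hx
  have hvx : v * x = y := by
    simp only at hval
    rw [hval]
    field_simp
  rwa [hvx] at this

/-- The semidirect product, as a type, is just a product. -/
def sdpEquiv {N G : Type} [Group N] [Group G] (φ : G →* MulAut N) :
    (N ⋊[φ] G) ≃ N × G :=
  ⟨fun g => (g.left, g.right), fun p => ⟨p.1, p.2⟩, fun _ => rfl, fun _ => rfl⟩

lemma card_C (hK : Fintype.card K = 16) : Nat.card (C K) = 5 := by
  classical
  have h15 : Fintype.card Kˣ = 15 := by rw [Fintype.card_units, hK]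
  haveI : Fact (Nat.Prime 5) := ⟨by norm_num⟩
  obtain ⟨ζ, hζ⟩ := exists_prime_orderOf_dvd_card (G := Kˣ) 5 (by rw [h15]; norm_num)
  have hmem : ζ ∈ C K := by
    rw [C, mem_rootsOfUnity]
    exact hζ ▸ pow_orderOf_eq_one ζ
  have h5dvd : (5 : ℕ) ∣ Nat.card (C K) := by
    have : orderOf (⟨ζ, hmem⟩ : C K) = 5 := by
      rw [← Subgroup.orderOf_coe]; exact hζ
    exact this ▸ orderOf_dvd_natCard _
  have hle : Nat.card (C K) ≤ 5 := by
    have := card_rootsOfUnity K 5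
    exact this
  have hpos : 0 < Nat.card (C K) := Nat.card_pos
  have h5le := Nat.le_of_dvd hpos h5dvd
  omega

lemma card_G80 (hK : Fintype.card K = 16) : Nat.card (G80 K) = 80 := by
  rw [Nat.card_congr (sdpEquiv (phi K)), Nat.card_prod]
  have h1 : Nat.card (Multiplicative K) = 16 := by
    rw [Nat.card_congr (Multiplicative.toAdd), Nat.card_eq_fintype_card, hK]
  rw [h1, card_C K hK]

lemma conj_inl {N G : Type} [CommGroup N] [Group G] {φ : G →* MulAut N}
    (g : N ⋊[φ] G) (n : N) :
    g * SemidirectProduct.inl n * g⁻¹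
      = SemidirectProduct.inl (φ (SemidirectProduct.rightHom g) n) := by
  ext
  · show (g * SemidirectProduct.inl n * g⁻¹).left = _
    simp only [SemidirectProduct.mul_left, SemidirectProduct.inv_left,
      SemidirectProduct.mul_right, SemidirectProduct.left_inl,
      SemidirectProduct.right_inl, mul_one, map_mul, MulAut.mul_apply]
    rw [← MulAut.mul_apply, ← map_mul, mul_inv_cancel, map_one, MulAut.one_apply,
      mul_inv_cancel_comm]
    rfl
  · show (g * SemidirectProduct.inl n * g⁻¹).right = _
    simp [SemidirectProduct.mul_right, SemidirectProduct.inv_right,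
      SemidirectProduct.right_inl]

omit [Fintype K] in
lemma phi_apply (c : C K) (a : K) :
    phi K c (Multiplicative.ofAdd a) = Multiplicative.ofAdd (((c : Kˣ) : K) * a) := rfl

/-- Every proper nontrivial subgroup of `G₈₀` is isomorphic to `ℤ/2`, `(ℤ/2)²`, `(ℤ/2)³`,
`(ℤ/2)⁴`, or `ℤ/5`. -/
theorem G80_proper_subgroups (hK : Fintype.card K = 16)
    (Γ : Subgroup (G80 K)) (h1 : Γ ≠ ⊥) (h2 : Γ ≠ ⊤) :
    Nonempty (Γ ≃* Multiplicative (ZMod 2)) ∨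
    Nonempty (Γ ≃* (Fin 2 → Multiplicative (ZMod 2))) ∨
    Nonempty (Γ ≃* (Fin 3 → Multiplicative (ZMod 2))) ∨
    Nonempty (Γ ≃* (Fin 4 → Multiplicative (ZMod 2))) ∨
    Nonempty (Γ ≃* Multiplicative (ZMod 5)) := by
  classical
  haveI : Finite (G80 K) := Finite.of_equiv _ (sdpEquiv (phi K)).symm
  have h2K : (2 : K) = 0 := char2_of_card16' K hK
  have hcC : Nat.card (C K) = 5 := card_C K hK
  have hcG : Nat.card (G80 K) = 80 := card_G80 K hK
  haveI : Fact (Nat.Prime 5) := ⟨by norm_num⟩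
  haveI : Fact (Nat.Prime 2) := ⟨by norm_num⟩
  have hMZ2 : Nat.card (Multiplicative (ZMod 2)) = 2 := by
    rw [Nat.card_congr (Multiplicative.toAdd), Nat.card_eq_fintype_card, ZMod.card]
  have hMZ5 : Nat.card (Multiplicative (ZMod 5)) = 5 := by
    rw [Nat.card_congr (Multiplicative.toAdd), Nat.card_eq_fintype_card, ZMod.card]
  -- squares of elements in the kernel of `rightHom` are trivial
  have hker2 : ∀ g : G80 K, SemidirectProduct.rightHom g = 1 → g * g = 1 := by
    intro g hg
    have hmem : g ∈ (SemidirectProduct.inl :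
        Multiplicative K →* G80 K).range := by
      rw [SemidirectProduct.range_inl_eq_ker_rightHom]; exact hg
    obtain ⟨y, rfl⟩ := hmem
    rw [← map_mul]
    have hy : y * y = 1 := by
      have h : y.toAdd + y.toAdd = 0 := by
        have h' : y.toAdd + y.toAdd = 2 * y.toAdd := by ring
        rw [h', h2K, zero_mul]
      have : y * y = Multiplicative.ofAdd (y.toAdd + y.toAdd) := rfl
      rw [this, h]
      rfl
    rw [hy, map_one]
  have hΓdvd : Nat.card Γ ∣ 80 := hcG ▸ Subgroup.card_subgroup_dvd_card Γ
  by_cases h5 : (5 : ℕ) ∣ Nat.card Γ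
  · -- `Γ` has order divisible by 5
    set N : Subgroup (G80 K) :=
      (SemidirectProduct.rightHom : G80 K →* C K).ker with hN
    by_cases hbot : Γ ⊓ N = ⊥
    · -- `Γ` has order `5`
      have hinj : Function.Injective
          ((SemidirectProduct.rightHom : G80 K →* C K).comp Γ.subtype) := by
        rw [← MonoidHom.ker_eq_bot_iff, eq_bot_iff]
        intro g hg
        have hgN : (g : G80 K) ∈ N := hg
        have hginf : (g : G80 K) ∈ Γ ⊓ N := ⟨g.2, hgN⟩
        rw [hbot, Subgroup.mem_bot] at hginf
        rw [Subgroup.mem_bot]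
        exact Subtype.ext hginf
      have hdvd5 : Nat.card Γ ∣ 5 :=
        hcC ▸ Subgroup.card_dvd_of_injective _ hinj
      have hc5 : Nat.card Γ = 5 := Nat.dvd_antisymm hdvd5 h5
      exact Or.inr (Or.inr (Or.inr (Or.inr ⟨mulEquivOfPrimeCardEq hc5 hMZ5⟩)))
    · -- impossible: `Γ` would be everything
      exfalso
      obtain ⟨⟨g0, hg0mem⟩, hg0ne⟩ := Subgroup.ne_bot_iff_exists_ne_one.mp hbot
      have hg0Γ : g0 ∈ Γ := hg0mem.1
      have hg0N : g0 ∈ N := hg0mem.2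
      have hg0ne' : g0 ≠ 1 := fun h => hg0ne (Subtype.ext h)
      have hg0mem' : g0 ∈ (SemidirectProduct.inl :
          Multiplicative K →* G80 K).range := by
        rw [SemidirectProduct.range_inl_eq_ker_rightHom]; exact hg0N
      obtain ⟨y0, rfl⟩ := hg0mem'
      obtain ⟨g, hg⟩ := exists_prime_orderOf_dvd_card' (G := Γ) 5 h5
      set c : C K := SemidirectProduct.rightHom (g : G80 K) with hc
      have hc1 : c ≠ 1 := by
        intro h
        have hsq : (g : G80 K) * g = 1 := hker2 _ h
        have hsq' : g * g = 1 := Subtype.ext hsq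
        have h2' : orderOf g ∣ 2 :=
          orderOf_dvd_of_pow_eq_one (by rw [pow_two]; exact hsq')
        rw [hg] at h2'
        norm_num at h2'
      set cv : K := ((c : Kˣ) : K) with hcv
      have hcv5 : cv ^ 5 = 1 := by
        have hmem : (c : Kˣ) ∈ rootsOfUnity 5 K := c.2
        rw [mem_rootsOfUnity] at hmem
        calc cv ^ 5 = (((c : Kˣ) ^ 5 : Kˣ) : K) := by push_cast; ring
        _ = 1 := by rw [hmem]; rfl
      have hcv1 : cv ≠ 1 := by
        intro h
        exact hc1 (Subtype.ext (Units.ext h))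
      let W : AddSubgroup K :=
      { carrier := {a : K | SemidirectProduct.inl (Multiplicative.ofAdd a) ∈ Γ}
        zero_mem' := by
          show SemidirectProduct.inl (Multiplicative.ofAdd (0:K)) ∈ Γ
          rw [ofAdd_zero, map_one]
          exact Γ.one_mem
        add_mem' := by
          intro a b ha hb
          show SemidirectProduct.inl (Multiplicative.ofAdd (a + b)) ∈ Γ
          rw [ofAdd_add, map_mul]
          exact Γ.mul_mem ha hb
        neg_mem' := by
          intro a ha
          show SemidirectProduct.inl (Multiplicative.ofAdd (-a)) ∈ Γ
          rw [ofAdd_neg, map_inv]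
          exact Γ.inv_mem ha }
      have hmulW : ∀ w ∈ W, cv * w ∈ W := by
        intro w hw
        have hco := conj_inl (g : G80 K) (Multiplicative.ofAdd w)
        have hmem : (g : G80 K) * SemidirectProduct.inl (Multiplicative.ofAdd w)
            * (g : G80 K)⁻¹ ∈ Γ := Γ.mul_mem (Γ.mul_mem g.2 hw) (Γ.inv_mem g.2)
        rw [hco, ← hc, phi_apply] at hmem
        exact hmem
      have hx0W : y0.toAdd ∈ W := by
        show SemidirectProduct.inl (Multiplicative.ofAdd y0.toAdd) ∈ Γ
        rw [ofAdd_toAdd]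
        exact hg0Γ
      have hx00 : y0.toAdd ≠ 0 := by
        intro h
        apply hg0ne'
        have : y0 = 1 := by
          rw [← ofAdd_toAdd y0, h, ofAdd_zero]
        rw [this, map_one]
      have hWtop := W_eq_top hK h2K cv hcv5 hcv1 W hmulW hx0W hx00
      have hNle : N ≤ Γ := by
        intro n hn
        have hmem : n ∈ (SemidirectProduct.inl :
            Multiplicative K →* G80 K).range := by
          rw [SemidirectProduct.range_inl_eq_ker_rightHom]; exact hn
        obtain ⟨y, rfl⟩ := hmem
        have : y.toAdd ∈ W := hWtop ▸ AddSubgroup.mem_top _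
        have h' : SemidirectProduct.inl (Multiplicative.ofAdd y.toAdd) ∈ Γ := this
        rwa [ofAdd_toAdd] at h'
      have hcN : Nat.card N = 16 := by
        have h' : Nat.card ((SemidirectProduct.inl :
            Multiplicative K →* G80 K).range) = 16 := by
          rw [← Nat.card_congr
            (MonoidHom.ofInjective SemidirectProduct.inl_injective).toEquiv]
          rw [Nat.card_congr (Multiplicative.toAdd), Nat.card_eq_fintype_card, hK]
        rw [hN, ← SemidirectProduct.range_inl_eq_ker_rightHom]
        exact h'
      have h16 : (16 : ℕ) ∣ Nat.card Γ := hcN ▸ Subgroup.card_dvd_of_le hNle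
      have h80 : (80 : ℕ) ∣ Nat.card Γ := by
        have hcop : Nat.Coprime 16 5 := by norm_num
        have := hcop.mul_dvd_of_dvd_of_dvd h16 h5
        simpa using this
      have hcard : Nat.card Γ = 80 := Nat.dvd_antisymm hΓdvd h80
      exact h2 (Subgroup.eq_top_of_card_eq _ (by rw [hcard, hcG]))
  · -- `Γ` is a `2`-group
    have hp5 : Nat.Prime 5 := by norm_num
    have hcop : Nat.Coprime (Nat.card Γ) 5 :=
      ((hp5.coprime_iff_not_dvd).mpr h5).symm
    have h16 : Nat.card Γ ∣ 16 := by
      apply hcop.dvd_of_dvd_mul_right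
      rw [show (16 * 5 : ℕ) = 80 by norm_num]
      exact hΓdvd
    have hexp : ∀ g : Γ, g * g = 1 := by
      intro g
      apply Subtype.ext
      push_cast
      apply hker2
      have hdvd1 : orderOf (SemidirectProduct.rightHom (g : G80 K)) ∣ 16 := by
        refine dvd_trans (orderOf_map_dvd _ _) ?_
        rw [Subgroup.orderOf_coe]
        exact dvd_trans (orderOf_dvd_natCard g) h16
      have hdvd2 : orderOf (SemidirectProduct.rightHom (g : G80 K)) ∣ 5 :=
        hcC ▸ orderOf_dvd_natCard _
      have : orderOf (SemidirectProduct.rightHom (g : G80 K)) ∣ Nat.gcd 16 5 :=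
        Nat.dvd_gcd hdvd1 hdvd2
      rw [show Nat.gcd 16 5 = 1 by norm_num, Nat.dvd_one] at this
      exact orderOf_eq_one_iff.mp this
    have h1' : Nat.card Γ ≠ 1 := fun h => h1 (Subgroup.card_eq_one.mp h)
    have h16' : Nat.card Γ ∣ 2 ^ 4 := by
      rw [show (2:ℕ) ^ 4 = 16 by norm_num]
      exact h16
    obtain ⟨r, hrle, hr⟩ := (Nat.dvd_prime_pow Nat.prime_two).mp h16'
    have hr1 : 1 ≤ r := by
      by_contra h
      push_neg at h
      interval_cases r
      exact h1' (by simpa using hr)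
    interval_cases r
    · exact Or.inl ⟨mulEquivOfPrimeCardEq (by rw [hr]; norm_num) hMZ2⟩
    · exact Or.inr (Or.inl (elemAb Γ hexp 2 hr))
    · exact Or.inr (Or.inr (Or.inl (elemAb Γ hexp 3 hr)))
    · exact Or.inr (Or.inr (Or.inr (Or.inl (elemAb Γ hexp 4 hr))))

end
end

section
/- There is no injective group homomorphism from the elementary abelian group (ℤ/2)⁴ into GL(3, ℂ); i.e. GL₃(ℂ) contains no subgroup isomorphic to (ℤ/2)⁴. -/
open Module Function

section Aux

variable {M : Type*} [AddCommGroup M] [Module ℂ M]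

lemma aux_maxGen_eq_bot (u : Module.End ℂ M) (hu : u * u = 1) {μ : ℂ} (hμ : μ * μ ≠ 1) :
    u.maxGenEigenspace μ = ⊥ := by
  set c : Module.End ℂ M := μ • 1 with hc
  have hcomm : c * u = u * c := by simp [hc, smul_mul_assoc, mul_smul_comm]
  have e1 : (u - c) * (u + c) = u * u - c * c := by
    rw [sub_mul, mul_add, mul_add, hcomm]; abel
  have e2 : (u + c) * (u - c) = u * u - c * c := by
    rw [add_mul, mul_sub, mul_sub, hcomm]; abel
  have h3 : c * c = (μ * μ) • 1 := by
    rw [hc, smul_mul_assoc, one_mul, smul_smul]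
  have e3 : u * u - c * c = (1 - μ * μ) • 1 := by
    rw [hu, h3]; module
  have hν : (1 - μ * μ) ≠ 0 := sub_ne_zero.mpr (Ne.symm hμ)
  set v : Module.End ℂ M := (1 - μ * μ)⁻¹ • (u + c) with hv
  have key : (u - c) * v = 1 := by
    rw [hv, mul_smul_comm, e1, e3, smul_smul, inv_mul_cancel₀ hν, one_smul]
  have key2 : v * (u - c) = 1 := by
    rw [hv, smul_mul_assoc, e2, e3, smul_smul, inv_mul_cancel₀ hν, one_smul]
  have hunit : IsUnit (u - c) := ⟨⟨u - c, v, key, key2⟩, rfl⟩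
  rw [eq_bot_iff]
  intro x hx
  rw [Module.End.mem_maxGenEigenspace] at hx
  obtain ⟨k, hk⟩ := hx
  obtain ⟨w, hw⟩ := (hunit.pow k).exists_left_inv
  have hx0 : x = w (((u - c) ^ k) x) := by
    rw [← Module.End.mul_apply, hw, Module.End.one_apply]
  rw [hk, map_zero] at hx0
  simpa using hx0

lemma aux_eigen (u : Module.End ℂ M) (hu : u * u = 1) {μ : ℂ} (hμ : μ * μ = 1)
    {x : M} (hx : x ∈ u.maxGenEigenspace μ) : u x = μ • x := by
  set c : Module.End ℂ M := μ • 1 with hc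
  have hsq : (u - c) * (u - c) = (-(2 * μ)) • (u - c) := by
    have expand : (u - c) * (u - c) = u * u - (u * c + c * u) + c * c := by
      rw [sub_mul, mul_sub, mul_sub]; abel
    have h1 : u * c = μ • u := by rw [hc, mul_smul_comm, mul_one]
    have h2 : c * u = μ • u := by rw [hc, smul_mul_assoc, one_mul]
    have h3 : c * c = (μ * μ) • 1 := by rw [hc, smul_mul_assoc, one_mul, smul_smul]
    rw [expand, hu, h1, h2, h3, hc]
    match_scalars
    all_goals first
    | ring1
    | linear_combination (-1:ℂ) * hμ
  have hpow : ∀ j : ℕ, (u - c) ^ (j + 1) = ((-(2 * μ)) ^ j) • (u - c) := by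
    intro j
    induction j with
    | zero => simp
    | succ n ih =>
      rw [pow_succ, ih, smul_mul_assoc, hsq, smul_smul, ← pow_succ]
  rw [Module.End.mem_maxGenEigenspace] at hx
  obtain ⟨k, hk⟩ := hx
  have hμ0 : μ ≠ 0 := by
    intro h0; rw [h0, mul_zero] at hμ; exact zero_ne_one hμ
  have h2μ : (-(2 * μ)) ≠ 0 := by
    simp [hμ0]
  have hkey : (u - c) x = 0 := by
    rcases k with _ | j
    · simp only [pow_zero, Module.End.one_apply] at hk
      rw [hk]; simp
    · rw [hpow j, LinearMap.smul_apply] at hk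
      rcases smul_eq_zero.mp hk with h | h
      · exact absurd h (pow_ne_zero j h2μ)
      · exact h
  have : u x - μ • x = 0 := by
    simpa [hc, LinearMap.sub_apply, LinearMap.smul_apply, Module.End.one_apply] using hkey
  exact sub_eq_zero.mp this

end Aux


/-- There is no injective group homomorphism from `(ℤ/2)⁴` into `GL(3, ℂ)`:
`GL₃(ℂ)` contains no subgroup isomorphic to `(ℤ/2)⁴`. -/
theorem no_embedding_elementary_abelian_sixteen_into_GL3 :
    ¬ ∃ φ : (Fin 4 → Multiplicative (ZMod 2)) →* Matrix.GeneralLinearGroup (Fin 3) ℂ,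
      Function.Injective φ := by
  rintro ⟨φ, hφ⟩
  set G := Fin 4 → Multiplicative (ZMod 2) with hG
  let f : G → Module.End ℂ (Fin 3 → ℂ) :=
    fun g => Matrix.toLinAlgEquiv' ((φ g : Matrix (Fin 3) (Fin 3) ℂ))
  have hmul : ∀ g h : G, f (g * h) = f g * f h := by
    intro g h
    simp only [f, map_mul, Units.val_mul]
  have hone : f 1 = 1 := by simp [f]
  have hsq : ∀ g : G, f g * f g = 1 := by
    intro g
    rw [← hmul]
    have hgg : g * g = 1 := by
      funext i
      have h2 : ∀ a : Multiplicative (ZMod 2), a * a = 1 := by decide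
      exact h2 (g i)
    rw [hgg, hone]
  have hcomm : ∀ g h : G, Commute (f g) (f h) := by
    intro g h
    unfold Commute SemiconjBy
    rw [← hmul, ← hmul, mul_comm]
  have htop : ∀ g : G, ⨆ μ, (f g).maxGenEigenspace μ = ⊤ :=
    fun g => Module.End.iSup_maxGenEigenspace_eq_top _
  have hiSup : ⨆ χ : G → ℂ, ⨅ g, (f g).maxGenEigenspace (χ g) = ⊤ :=
    Module.End.iSup_iInf_maxGenEigenspace_eq_top_of_iSup_maxGenEigenspace_eq_top_of_commute f
      (fun g h _ => hcomm g h) htop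
  set W : (G → ℂ) → Submodule ℂ (Fin 3 → ℂ) :=
    fun χ => ⨅ g, (f g).maxGenEigenspace (χ g) with hW
  have hindep : iSupIndep W :=
    Module.End.independent_iInf_maxGenEigenspace_of_forall_mapsTo f
      (fun i j μ => Module.End.mapsTo_maxGenEigenspace_of_comm (hcomm j i) μ)
  have hval : ∀ χ : G → ℂ, W χ ≠ ⊥ → ∀ g : G, χ g * χ g = 1 := by
    intro χ hχ g
    by_contra h
    apply hχ
    rw [eq_bot_iff, hW]
    exact (iInf_le _ g).trans_eq (aux_maxGen_eq_bot (f g) (hsq g) h)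
  have hact : ∀ (χ : G → ℂ), W χ ≠ ⊥ → ∀ (g : G) (x : Fin 3 → ℂ),
      x ∈ W χ → f g x = χ g • x := by
    intro χ hχ g x hx
    refine aux_eigen (f g) (hsq g) (hval χ hχ g) ?_
    rw [hW] at hx
    exact (Submodule.mem_iInf _).mp hx g
  haveI : Fintype {χ : G → ℂ // W χ ≠ ⊥} := hindep.fintypeNeBotOfFiniteDimensional
  have hcard : Fintype.card {χ : G → ℂ // W χ ≠ ⊥} ≤ 3 := by
    have h := hindep.subtype_ne_bot_le_finrank
    simpa using h
  have hinj : Function.Injective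
      (fun (g : G) (χ : {χ : G → ℂ // W χ ≠ ⊥}) => decide (χ.1 g = 1)) := by
    intro g g' h
    suffices hf : f g = f g' by
      have hm : ((φ g : Matrix (Fin 3) (Fin 3) ℂ)) = (φ g' : Matrix (Fin 3) (Fin 3) ℂ) :=
        Matrix.toLinAlgEquiv'.injective hf
      exact hφ (Units.ext hm)
    apply LinearMap.ext
    intro x
    have hxtop : x ∈ (⊤ : Submodule ℂ (Fin 3 → ℂ)) := trivial
    rw [← hiSup] at hxtop
    refine Submodule.iSup_induction (motive := fun y => f g y = f g' y) _ hxtop ?_ ?_ ?_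
    · intro χ y hy
      by_cases hb : W χ = ⊥
      · have hy' : y ∈ W χ := hy
        rw [hb] at hy'
        have : y = 0 := by simpa using hy'
        simp [this]
      · have hd : χ g = 1 ↔ χ g' = 1 := by
          have := congrFun h ⟨χ, hb⟩
          simpa [decide_eq_decide] using this
        have heq : χ g = χ g' := by
          have hne : (-1 : ℂ) ≠ 1 := by norm_num
          rcases mul_self_eq_one_iff.mp (hval χ hb g) with h1 | h1 <;>
            rcases mul_self_eq_one_iff.mp (hval χ hb g') with h2 | h2
          · rw [h1, h2]
          · exact absurd (h2.symm.trans (hd.mp h1)) hne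
          · exact absurd (h1.symm.trans (hd.mpr h2)) hne
          · rw [h1, h2]
        rw [hact χ hb g y hy, hact χ hb g' y hy, heq]
    · simp
    · intro y z hy hz
      simp [map_add, hy, hz]
  have hle := Fintype.card_le_of_injective _ hinj
  have hcardG : Fintype.card G = 16 := by
    simp [hG]
  rw [hcardG, Fintype.card_fun, Fintype.card_bool] at hle
  have : (2:ℕ) ^ Fintype.card {χ : G → ℂ // W χ ≠ ⊥} ≤ 2 ^ 3 :=
    Nat.pow_le_pow_right (by norm_num) hcard
  omega
end

section
/- Let φ : A₄ → PGL(2, ℂ) be an injective group homomorphism, and consider the induced action of A₄ on ℙ¹(ℂ). Then every A₄-orbit on ℙ¹(ℂ) has cardinality 4, 6, or 12; moreover there are exactly two orbits of cardinality 4 and exactly one orbit of cardinality 6. -/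
noncomputable section

/-- The projective line `ℙ¹(ℂ)`, the projectivization of `ℂ²`. -/
abbrev P1C : Type := Projectivization ℂ (Fin 2 → ℂ)

/-- `PGL(2, ℂ)`, the quotient of `GL(2, ℂ)` by its center. -/
abbrev PGL2C : Type :=
  Matrix.GeneralLinearGroup (Fin 2) ℂ ⧸ Subgroup.center (Matrix.GeneralLinearGroup (Fin 2) ℂ)

abbrev GL2C := Matrix.GeneralLinearGroup (Fin 2) ℂ

-- center of GL2 is scalar
lemma center_is_scalar {z : GL2C} (hz : z ∈ Subgroup.center GL2C) :
    ∃ c : ℂˣ, (z : Matrix (Fin 2) (Fin 2) ℂ) = (c : ℂ) • 1 := by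
  have h : ∀ t : Matrix.TransvectionStruct (Fin 2) ℂ,
      Commute t.toMatrix (z : Matrix (Fin 2) (Fin 2) ℂ) := by
    intro t
    have ht : (⟨t.toMatrix, t.inv.toMatrix, t.mul_inv, t.inv_mul⟩ : GL2C) * z =
        z * (⟨t.toMatrix, t.inv.toMatrix, t.mul_inv, t.inv_mul⟩ : GL2C) := by
      exact Subgroup.mem_center_iff.mp hz _
    have := congrArg (fun u : GL2C => (u : Matrix (Fin 2) (Fin 2) ℂ)) ht
    simpa [Commute, SemiconjBy] using this
  obtain ⟨r, hr⟩ := Matrix.mem_range_scalar_of_commute_transvectionStruct h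
  have hr' : (z : Matrix (Fin 2) (Fin 2) ℂ) = r • (1 : Matrix (Fin 2) (Fin 2) ℂ) := by
    rw [← hr]; ext i j; simp [Matrix.scalar_apply, Matrix.smul_apply, Matrix.one_apply, Matrix.diagonal_apply]
  have hrne : r ≠ 0 := by
    intro h0
    have h1 : (z : Matrix (Fin 2) (Fin 2) ℂ) * ((z⁻¹ : GL2C) : Matrix (Fin 2) (Fin 2) ℂ) = 1 := by
      rw [← Units.val_mul, mul_inv_cancel, Units.val_one]
    rw [hr', h0, zero_smul, zero_mul] at h1
    have h2 := congrFun (congrFun h1 0) 0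
    simp [Matrix.one_apply, Matrix.zero_apply] at h2
  exact ⟨Units.mk0 r hrne, hr'⟩

-- paste original file's GL2 action pieces
lemma GL2_mulVec_ne_zero (g : Matrix.GeneralLinearGroup (Fin 2) ℂ) {v : Fin 2 → ℂ}
    (hv : v ≠ 0) : (g : Matrix (Fin 2) (Fin 2) ℂ).mulVec v ≠ 0 := by
  intro h
  apply hv
  have h2 : (((g⁻¹ : Matrix.GeneralLinearGroup (Fin 2) ℂ) : Matrix (Fin 2) (Fin 2) ℂ) *
      (g : Matrix (Fin 2) (Fin 2) ℂ)).mulVec v = 0 := by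
    rw [← Matrix.mulVec_mulVec, h, Matrix.mulVec_zero]
  rwa [← Units.val_mul, inv_mul_cancel, Units.val_one, Matrix.one_mulVec] at h2

/-- `GL(2, ℂ)` acts on `ℙ¹(ℂ)` via the maps induced on the projectivization by the associated
linear equivalences of `ℂ²`. -/
instance GL2SMulP1 : SMul (Matrix.GeneralLinearGroup (Fin 2) ℂ) P1C :=
  ⟨fun g x => Projectivization.mk ℂ ((g : Matrix (Fin 2) (Fin 2) ℂ).mulVec x.rep)
    (GL2_mulVec_ne_zero g x.rep_nonzero)⟩

lemma GL2_smul_P1_def (g : Matrix.GeneralLinearGroup (Fin 2) ℂ) (x : P1C) :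
    g • x = Projectivization.mk ℂ ((g : Matrix (Fin 2) (Fin 2) ℂ).mulVec x.rep)
      (GL2_mulVec_ne_zero g x.rep_nonzero) := rfl

/-- The action of `GL(2, ℂ)` on `ℙ¹(ℂ)` is a group action. -/
instance GL2MulActionP1 : MulAction (Matrix.GeneralLinearGroup (Fin 2) ℂ) P1C where
  one_smul x := by
    rw [GL2_smul_P1_def]
    simp only [Units.val_one, Matrix.one_mulVec]
    exact x.mk_rep
  mul_smul g h x := by
    obtain ⟨a, ha⟩ := Projectivization.exists_smul_eq_mk_rep ℂ
      ((h : Matrix (Fin 2) (Fin 2) ℂ).mulVec x.rep) (GL2_mulVec_ne_zero h x.rep_nonzero)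
    rw [GL2_smul_P1_def, GL2_smul_P1_def, GL2_smul_P1_def, Projectivization.mk_eq_mk_iff]
    refine ⟨a⁻¹, ?_⟩
    conv_lhs => rw [← ha]
    rw [Matrix.mulVec_smul, ← mul_smul, inv_mul_cancel, one_smul, Units.val_mul,
      ← Matrix.mulVec_mulVec]

/-- The preimage in `GL(2, ℂ)` of the image of a homomorphism `φ` into `PGL(2, ℂ)`. -/
def glLift {G : Type*} [Group G] (φ : G →* PGL2C) :
    Subgroup (Matrix.GeneralLinearGroup (Fin 2) ℂ) :=
  Subgroup.comap
    (QuotientGroup.mk' (Subgroup.center (Matrix.GeneralLinearGroup (Fin 2) ℂ))) φ.range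

/-- The orbit of a point of `ℙ¹(ℂ)` under the action of a group `G` induced by a homomorphism
`φ : G →* PGL(2, ℂ)`: since the center of `GL(2, ℂ)` acts trivially on `ℙ¹(ℂ)`, this is the set
of translates of the point by the preimage in `GL(2, ℂ)` of the image of `φ`. -/
def orbitOf {G : Type*} [Group G] (φ : G →* PGL2C) (x : P1C) : Set P1C :=
  {y | ∃ g ∈ glLift φ, g • x = y}

-- new: smul of mk
lemma GL2_smul_mk (g : GL2C) (v : Fin 2 → ℂ) (hv : v ≠ 0) :
    g • Projectivization.mk ℂ v hv =
      Projectivization.mk ℂ ((g : Matrix (Fin 2) (Fin 2) ℂ).mulVec v)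
        (GL2_mulVec_ne_zero g hv) := by
  rw [GL2_smul_P1_def, Projectivization.mk_eq_mk_iff]
  obtain ⟨a, ha⟩ := Projectivization.exists_smul_eq_mk_rep ℂ v hv
  refine ⟨a, ?_⟩
  rw [← ha, Matrix.mulVec_smul]

lemma scalar_smul_triv (g : GL2C) (c : ℂ) (hg : (g : Matrix (Fin 2) (Fin 2) ℂ) = c • 1)
    (x : P1C) : g • x = x := by
  have hc : c ≠ 0 := by
    intro h0
    have := GL2_mulVec_ne_zero g x.rep_nonzero
    rw [hg, h0, zero_smul, Matrix.zero_mulVec] at this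
    exact this rfl
  conv_rhs => rw [← x.mk_rep]
  rw [GL2_smul_P1_def, Projectivization.mk_eq_mk_iff, hg]
  exact ⟨Units.mk0 c hc, by simp [Matrix.smul_mulVec, Matrix.one_mulVec]⟩

lemma center_smul_triv (z : GL2C) (hz : z ∈ Subgroup.center GL2C) (x : P1C) : z • x = x := by
  obtain ⟨c, hc⟩ := center_is_scalar hz
  exact scalar_smul_triv z c hc x

instance PGLSMulP1 : SMul PGL2C P1C :=
  ⟨fun k x => Quotient.liftOn' k (fun g => g • x) (by
    intro g h hgh
    rw [QuotientGroup.leftRel_apply] at hgh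
    have : h = g * (g⁻¹ * h) := by group
    rw [this, mul_smul, center_smul_triv _ hgh])⟩

lemma PGL_smul_mk_eq (g : GL2C) (x : P1C) :
    (QuotientGroup.mk g : PGL2C) • x = g • x := rfl

instance PGLMulActionP1 : MulAction PGL2C P1C where
  one_smul x := by
    have : (1 : PGL2C) = QuotientGroup.mk 1 := rfl
    rw [this, PGL_smul_mk_eq, one_smul]
  mul_smul k l x := by
    induction k using QuotientGroup.induction_on
    induction l using QuotientGroup.induction_on
    rename_i g h
    rw [← QuotientGroup.mk_mul, PGL_smul_mk_eq, PGL_smul_mk_eq, PGL_smul_mk_eq, mul_smul]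
-- helper: nonzero matrix has nonzero mulVec on some vector
lemma exists_mulVec_ne_zero {N : Matrix (Fin 2) (Fin 2) ℂ} (hN : N ≠ 0) :
    ∃ v : Fin 2 → ℂ, N.mulVec v ≠ 0 := by
  by_contra h
  push_neg at h
  apply hN
  ext i j
  have := congrFun (h (Pi.single j 1)) i
  simpa [Matrix.mulVec_single] using this

lemma eigen_structure (M : Matrix (Fin 2) (Fin 2) ℂ)
    (hns : ∀ c : ℂ, M ≠ c • 1) (c : ℂ) (hc : c ≠ 0) (hpow : M ^ 12 = c • 1) :
    ∃ (l m : ℂ) (u w : Fin 2 → ℂ), l ≠ m ∧ u ≠ 0 ∧ w ≠ 0 ∧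
      M.mulVec u = l • u ∧ M.mulVec w = m • w ∧
      (∀ v : Fin 2 → ℂ, v ≠ 0 → ∀ a : ℂ, M.mulVec v = a • v →
        (∃ t : ℂ, v = t • u) ∨ (∃ t : ℂ, v = t • w)) := by
  have hint : IsIntegral ℂ M := Algebra.IsIntegral.isIntegral M
  set p := minpoly ℂ M with hp
  -- p divides X^12 - C c
  have hq0 : Polynomial.aeval M (Polynomial.X ^ 12 - Polynomial.C c) = 0 := by
    simp [hpow, Algebra.algebraMap_eq_smul_one]
  have hdvd : p ∣ Polynomial.X ^ 12 - Polynomial.C c := minpoly.dvd ℂ M hq0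
  have hqsep : (Polynomial.X ^ 12 - Polynomial.C c).Separable :=
    Polynomial.separable_X_pow_sub_C c (by norm_num) hc
  have hpsep : p.Separable := hqsep.of_dvd hdvd
  have hpmonic : p.Monic := minpoly.monic hint
  -- degree = 2
  have hdeg_le : p.natDegree ≤ 2 := by
    have h1 : p ∣ M.charpoly := Matrix.minpoly_dvd_charpoly M
    have h2 : M.charpoly.natDegree = 2 := by
      simpa using M.charpoly_natDegree_eq_dim
    calc p.natDegree ≤ M.charpoly.natDegree :=
          Polynomial.natDegree_le_of_dvd h1 (Matrix.charpoly_monic M).ne_zero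
      _ = 2 := h2
  have hdeg_ne0 : p.natDegree ≠ 0 := by
    intro h
    have := Polynomial.eq_one_of_monic_natDegree_zero hpmonic h
    exact minpoly.ne_one ℂ M this
  have hdeg_ne1 : p.natDegree ≠ 1 := by
    intro h
    have hXC : p = Polynomial.X + Polynomial.C (p.coeff 0) := by
      have h2 : p.natDegree ≤ 1 := h.le
      have h3 := Polynomial.eq_X_add_C_of_natDegree_le_one h2
      have hcc : p.coeff 1 = 1 := by
        have : p.leadingCoeff = 1 := hpmonic
        rwa [Polynomial.leadingCoeff, h] at this
      rwa [hcc, Polynomial.C_1, one_mul] at h3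
    have haev := minpoly.aeval ℂ M
    rw [← hp, hXC] at haev
    simp only [map_add, Polynomial.aeval_X, Polynomial.aeval_C] at haev
    apply hns (-(p.coeff 0))
    have h4 : M = -(algebraMap ℂ (Matrix (Fin 2) (Fin 2) ℂ) (p.coeff 0)) :=
      eq_neg_of_add_eq_zero_left haev
    rw [h4, Algebra.algebraMap_eq_smul_one, neg_smul]
  have hdeg : p.natDegree = 2 := by omega
  -- roots
  have hsplits : p.Splits := IsAlgClosed.splits p
  have hroots_card : p.roots.card = 2 := by
    have h := hsplits.natDegree_eq_card_roots
    rw [← h, hdeg]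
  have hnodup : p.roots.Nodup := Polynomial.nodup_roots hpsep
  obtain ⟨l, m, hlm⟩ := Multiset.card_eq_two.mp hroots_card
  have hlne : l ≠ m := by
    rw [hlm, Multiset.insert_eq_cons, Multiset.nodup_cons] at hnodup
    simpa using hnodup.1
  have hprod : p = (Polynomial.X - Polynomial.C l) * (Polynomial.X - Polynomial.C m) := by
    have h := hsplits.eq_prod_roots_of_monic hpmonic
    rw [hlm] at h
    simpa [Multiset.map_cons, Multiset.prod_cons] using h
  have hfact : (M - l • 1) * (M - m • 1) = 0 := by
    have haev := minpoly.aeval ℂ M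
    rw [← hp, hprod, map_mul, map_sub, map_sub, Polynomial.aeval_X, Polynomial.aeval_C,
      Polynomial.aeval_C, Algebra.algebraMap_eq_smul_one,
      Algebra.algebraMap_eq_smul_one] at haev
    exact haev
  have hfact' : (M - m • 1) * (M - l • 1) = 0 := by
    have hcomm : (M - l • 1) * (M - m • 1) = (M - m • 1) * (M - l • 1) := by
      simp only [sub_mul, mul_sub, Matrix.smul_mul, Matrix.mul_smul, Matrix.one_mul,
        Matrix.mul_one]
      rw [smul_smul, smul_smul, mul_comm l m]
      abel
    rw [← hcomm]
    exact hfact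
  -- eigenvector u for l
  have hMl : M - l • 1 ≠ 0 := fun h => hns l (by rwa [sub_eq_zero] at h)
  have hMm : M - m • 1 ≠ 0 := fun h => hns m (by rwa [sub_eq_zero] at h)
  obtain ⟨v₀, hv₀⟩ := exists_mulVec_ne_zero hMm
  obtain ⟨v₁, hv₁⟩ := exists_mulVec_ne_zero hMl
  set u := (M - m • 1).mulVec v₀ with hu_def
  set w := (M - l • 1).mulVec v₁ with hw_def
  have key : ∀ (A B : Matrix (Fin 2) (Fin 2) ℂ) (x : Fin 2 → ℂ) (e : ℂ),
      A * B = 0 → A = M - e • 1 → A.mulVec (B.mulVec x) = 0 := by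
    intro A B x e hAB _
    rw [Matrix.mulVec_mulVec, hAB, Matrix.zero_mulVec]
  have heig : ∀ (e : ℂ) (x : Fin 2 → ℂ), (M - e • 1).mulVec x = 0 → M.mulVec x = e • x := by
    intro e x hx
    rw [Matrix.sub_mulVec, Matrix.smul_mulVec, Matrix.one_mulVec, sub_eq_zero] at hx
    exact hx
  have hMu : M.mulVec u = l • u := by
    apply heig
    rw [hu_def, Matrix.mulVec_mulVec, hfact, Matrix.zero_mulVec]
  have hMw : M.mulVec w = m • w := by
    apply heig
    rw [hw_def, Matrix.mulVec_mulVec, hfact', Matrix.zero_mulVec]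
  -- independence of u, w
  have hnotprop : ∀ t : ℂ, t • w ≠ u := by
    intro t ht
    have h1 : M.mulVec (t • w) = (t * m) • w := by
      rw [Matrix.mulVec_smul, hMw, smul_smul]
    rw [ht, hMu, ← ht] at h1
    have h2 : (l * t - t * m) • w = 0 := by
      rw [sub_smul, sub_eq_zero, mul_smul]
      exact h1
    rcases smul_eq_zero.mp h2 with h3 | h3
    · have htne : t ≠ 0 := by
        intro h0; rw [h0, zero_smul] at ht; exact hv₀ ht.symm
      apply hlne
      have h4 : t * (l - m) = 0 := by linear_combination h3
      rcases mul_eq_zero.mp h4 with h | h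
      · exact absurd h htne
      · exact sub_eq_zero.mp h
    · exact hv₁ h3
  have hli : LinearIndependent ℂ ![u, w] := by
    rw [linearIndependent_fin2]
    constructor
    · simpa using hv₁
    · simpa using hnotprop
  have hcard : Fintype.card (Fin 2) = Module.finrank ℂ (Fin 2 → ℂ) := by
    simp [Module.finrank_fin_fun]
  let b := basisOfLinearIndependentOfCardEqFinrank hli hcard
  have hb : ⇑b = ![u, w] := coe_basisOfLinearIndependentOfCardEqFinrank hli hcard
  refine ⟨l, m, u, w, hlne, (by simpa using hv₀), (by simpa using hv₁), hMu, hMw, ?_⟩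
  intro v hv a hva
  -- a is l or m
  have hzero : ((a - l) * (a - m)) • v = 0 := by
    have h1 : (M - m • 1).mulVec v = (a - m) • v := by
      rw [Matrix.sub_mulVec, Matrix.smul_mulVec, Matrix.one_mulVec, hva, sub_smul]
    have h2 : ((M - l • 1) * (M - m • 1)).mulVec v = 0 := by
      rw [hfact, Matrix.zero_mulVec]
    rw [← Matrix.mulVec_mulVec, h1, Matrix.mulVec_smul, Matrix.sub_mulVec,
      Matrix.smul_mulVec, Matrix.one_mulVec, hva, ← sub_smul, smul_smul, mul_comm] at h2
    exact h2
  have hal : a = l ∨ a = m := by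
    rcases smul_eq_zero.mp hzero with h | h
    · rcases mul_eq_zero.mp h with h | h
      · left; exact sub_eq_zero.mp h
      · right; exact sub_eq_zero.mp h
    · exact absurd h hv
  -- represent v in basis
  have hrepr : v = b.repr v 0 • u + b.repr v 1 • w := by
    have h := b.sum_repr v
    rw [Fin.sum_univ_two, congrFun hb 0, congrFun hb 1] at h
    simpa using h.symm
  set r0 := b.repr v 0
  set r1 := b.repr v 1
  have hMv : a • v = (r0 * l) • u + (r1 * m) • w := by
    rw [← hva]
    conv_lhs => rw [hrepr]
    rw [Matrix.mulVec_add, Matrix.mulVec_smul, Matrix.mulVec_smul, hMu, hMw,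
      smul_smul, smul_smul]
  have hMv' : a • v = (a * r0) • u + (a * r1) • w := by
    conv_lhs => rw [hrepr]
    rw [smul_add, smul_smul, smul_smul]
  have heq : (r0 * l - a * r0) • u + (r1 * m - a * r1) • w = 0 := by
    have h12 := hMv.symm.trans hMv'
    rw [sub_smul, sub_smul, sub_add_sub_comm, h12, sub_self]
  have hcoef := linearIndependent_iff'.mp hli Finset.univ
    ![r0 * l - a * r0, r1 * m - a * r1] (by
      rw [Fin.sum_univ_two]
      simpa using heq)
  have hc0 : r0 * l - a * r0 = 0 := by simpa using hcoef 0 (Finset.mem_univ 0)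
  have hc1 : r1 * m - a * r1 = 0 := by simpa using hcoef 1 (Finset.mem_univ 1)
  rcases hal with h | h
  · left
    refine ⟨r0, ?_⟩
    have hr1 : r1 = 0 := by
      rcases mul_eq_zero.mp (show r1 * (m - a) = 0 by linear_combination hc1) with h6 | h6
      · exact h6
      · exact absurd ((sub_eq_zero.mp h6).trans h).symm hlne
    rw [hrepr, hr1, zero_smul, add_zero]
  · right
    refine ⟨r1, ?_⟩
    have hr0 : r0 = 0 := by
      rcases mul_eq_zero.mp (show r0 * (l - a) = 0 by linear_combination hc0) with h6 | h6
      · exact h6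
      · exact absurd ((sub_eq_zero.mp h6).trans h) hlne
    rw [hrepr, hr0, zero_smul, zero_add]

lemma scalar_central (g : GL2C) (c : ℂ) (h : (g : Matrix (Fin 2) (Fin 2) ℂ) = c • 1) :
    g ∈ Subgroup.center GL2C := by
  rw [Subgroup.mem_center_iff]
  intro b
  ext1
  rw [Units.val_mul, Units.val_mul, h, Matrix.mul_smul, Matrix.smul_mul, Matrix.mul_one,
    Matrix.one_mul]

lemma pgl_pow_scalar (g : GL2C) (n : ℕ) (h : (QuotientGroup.mk g : PGL2C) ^ n = 1) :
    ∃ c : ℂˣ, (g : Matrix (Fin 2) (Fin 2) ℂ) ^ n = (c : ℂ) • 1 := by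
  have h1 : (QuotientGroup.mk (g ^ n) : PGL2C) = 1 := by
    rw [QuotientGroup.mk_pow]; exact h
  have h2 : g ^ n ∈ Subgroup.center GL2C := (QuotientGroup.eq_one_iff _).mp h1
  obtain ⟨c, hc⟩ := center_is_scalar h2
  exact ⟨c, by rw [← Units.val_pow_eq_pow_val]; exact hc⟩

lemma pgl_nonscalar (g : GL2C) (hk : (QuotientGroup.mk g : PGL2C) ≠ 1) :
    ∀ c : ℂ, (g : Matrix (Fin 2) (Fin 2) ℂ) ≠ c • 1 := by
  intro c h
  exact hk ((QuotientGroup.eq_one_iff _).mpr (scalar_central g c h))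

-- FIX: a nontrivial element of PGL2C with k^12 = 1 has exactly two fixed points
lemma exists_two_fixed_points (k : PGL2C) (hk : k ≠ 1) (hk12 : k ^ 12 = 1) :
    ∃ p q : P1C, p ≠ q ∧ ∀ z : P1C, k • z = z ↔ z = p ∨ z = q := by
  obtain ⟨g, rfl⟩ := QuotientGroup.mk_surjective k
  obtain ⟨c, hc⟩ := pgl_pow_scalar g 12 hk12
  obtain ⟨l, m, u, w, hlm, hu, hw, hMu, hMw, hclass⟩ :=
    eigen_structure (g : Matrix (Fin 2) (Fin 2) ℂ) (pgl_nonscalar g hk) c c.ne_zero hc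
  have hlu : (l : ℂ) ≠ 0 := by
    intro h0
    have := GL2_mulVec_ne_zero g hu
    rw [hMu, h0, zero_smul] at this
    exact this rfl
  have hmw : (m : ℂ) ≠ 0 := by
    intro h0
    have := GL2_mulVec_ne_zero g hw
    rw [hMw, h0, zero_smul] at this
    exact this rfl
  refine ⟨Projectivization.mk ℂ u hu, Projectivization.mk ℂ w hw, ?_, ?_⟩
  · intro heq
    obtain ⟨a, ha⟩ := (Projectivization.mk_eq_mk_iff ℂ u w hu hw).mp heq
    have h1 : (g : Matrix (Fin 2) (Fin 2) ℂ).mulVec u = m • u := by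
      rw [← ha, Matrix.mulVec_smul, hMw, smul_comm]
    rw [hMu] at h1
    have h2 : (l - m) • u = 0 := by rw [sub_smul, h1, sub_self]
    rcases smul_eq_zero.mp h2 with h3 | h3
    · exact hlm (sub_eq_zero.mp h3)
    · exact hu h3
  · intro z
    constructor
    · intro hz
      rw [PGL_smul_mk_eq, GL2_smul_P1_def] at hz
      have hz' : Projectivization.mk ℂ ((g : Matrix (Fin 2) (Fin 2) ℂ).mulVec z.rep)
          (GL2_mulVec_ne_zero g z.rep_nonzero) = Projectivization.mk ℂ z.rep z.rep_nonzero := by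
        rw [hz]; exact z.mk_rep.symm
      obtain ⟨a, ha⟩ := (Projectivization.mk_eq_mk_iff ℂ _ _ _ _).mp hz'
      have heig : (g : Matrix (Fin 2) (Fin 2) ℂ).mulVec z.rep = (a : ℂ) • z.rep := ha.symm
      rcases hclass z.rep z.rep_nonzero (a : ℂ) heig with ⟨t, ht⟩ | ⟨t, ht⟩
      · left
        have htne : t ≠ 0 := by
          intro h0; rw [h0, zero_smul] at ht; exact z.rep_nonzero ht
        rw [← z.mk_rep]
        rw [Projectivization.mk_eq_mk_iff]
        exact ⟨Units.mk0 t htne, ht.symm⟩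
      · right
        have htne : t ≠ 0 := by
          intro h0; rw [h0, zero_smul] at ht; exact z.rep_nonzero ht
        rw [← z.mk_rep]
        rw [Projectivization.mk_eq_mk_iff]
        exact ⟨Units.mk0 t htne, ht.symm⟩
    · intro hz
      rcases hz with rfl | rfl
      · rw [PGL_smul_mk_eq, GL2_smul_mk, Projectivization.mk_eq_mk_iff]
        exact ⟨Units.mk0 l hlu, by rw [hMu]; rfl⟩
      · rw [PGL_smul_mk_eq, GL2_smul_mk, Projectivization.mk_eq_mk_iff]
        exact ⟨Units.mk0 m hmw, by rw [hMw]; rfl⟩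

lemma matrix_eq_of_agree_basis {A B : Matrix (Fin 2) (Fin 2) ℂ} {u w : Fin 2 → ℂ}
    (hli : LinearIndependent ℂ ![u, w]) (h1 : A.mulVec u = B.mulVec u)
    (h2 : A.mulVec w = B.mulVec w) : A = B := by
  have hcard : Fintype.card (Fin 2) = Module.finrank ℂ (Fin 2 → ℂ) := by
    simp [Module.finrank_fin_fun]
  let bb := basisOfLinearIndependentOfCardEqFinrank hli hcard
  have hbb : ⇑bb = ![u, w] := coe_basisOfLinearIndependentOfCardEqFinrank hli hcard
  have hlin : Matrix.toLin' A = Matrix.toLin' B := by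
    apply bb.ext
    intro i
    fin_cases i <;>
      simp only [Matrix.toLin'_apply, congrFun hbb, Matrix.cons_val_zero, Matrix.cons_val_one,
        Matrix.head_cons] <;>
      first
        | exact h1
        | exact h2
  exact Matrix.toLin'.injective hlin

lemma li_of_ne {p q : P1C} (hpq : p ≠ q) : LinearIndependent ℂ ![p.rep, q.rep] := by
  rw [linearIndependent_fin2]
  refine ⟨by simpa using q.rep_nonzero, ?_⟩
  intro a ha
  simp only [Matrix.cons_val_one, Matrix.head_cons, Matrix.cons_val_zero] at ha
  have hane : a ≠ 0 := by
    intro h0; rw [h0, zero_smul] at ha; exact p.rep_nonzero ha.symm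
  apply hpq
  rw [← p.mk_rep, ← q.mk_rep, Projectivization.mk_eq_mk_iff]
  exact ⟨Units.mk0 a hane, ha⟩

-- SAME: two involutions with the same two fixed points are equal
lemma involution_eq_of_two_fixed {k l' : PGL2C} {p q : P1C} (hpq : p ≠ q)
    (hk1 : k ≠ 1) (hk2 : k ^ 2 = 1) (hl1 : l' ≠ 1) (hl2 : l' ^ 2 = 1)
    (hkp : k • p = p) (hkq : k • q = q) (hlp : l' • p = p) (hlq : l' • q = q) : k = l' := by
  obtain ⟨g, rfl⟩ := QuotientGroup.mk_surjective k
  obtain ⟨h, rfl⟩ := QuotientGroup.mk_surjective l'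
  set u := p.rep with hu_def
  set w := q.rep with hw_def
  have hli := li_of_ne hpq
  -- eigenvalue data for a matrix g with given fixed points
  have eig : ∀ (g' : GL2C), (QuotientGroup.mk g' : PGL2C) • p = p →
      (QuotientGroup.mk g' : PGL2C) • q = q →
      ∃ a b : ℂ, a ≠ 0 ∧ b ≠ 0 ∧
        (g' : Matrix (Fin 2) (Fin 2) ℂ).mulVec u = a • u ∧
        (g' : Matrix (Fin 2) (Fin 2) ℂ).mulVec w = b • w := by
    intro g' hp' hq'
    rw [PGL_smul_mk_eq, GL2_smul_P1_def] at hp' hq'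
    have hp'' : Projectivization.mk ℂ ((g' : Matrix (Fin 2) (Fin 2) ℂ).mulVec u)
        (GL2_mulVec_ne_zero g' p.rep_nonzero) = Projectivization.mk ℂ u p.rep_nonzero := by
      rw [hp']; exact p.mk_rep.symm
    have hq'' : Projectivization.mk ℂ ((g' : Matrix (Fin 2) (Fin 2) ℂ).mulVec w)
        (GL2_mulVec_ne_zero g' q.rep_nonzero) = Projectivization.mk ℂ w q.rep_nonzero := by
      rw [hq']; exact q.mk_rep.symm
    obtain ⟨a, ha⟩ := (Projectivization.mk_eq_mk_iff ℂ _ _ _ _).mp hp''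
    obtain ⟨b, hb⟩ := (Projectivization.mk_eq_mk_iff ℂ _ _ _ _).mp hq''
    exact ⟨a, b, a.ne_zero, b.ne_zero, ha.symm, hb.symm⟩
  obtain ⟨a, b, ha0, hb0, hau, hbw⟩ := eig g hkp hkq
  obtain ⟨a', b', ha0', hb0', hau', hbw'⟩ := eig h hlp hlq
  -- squares are scalar
  obtain ⟨c, hc⟩ := pgl_pow_scalar g 2 hk2
  obtain ⟨c', hc'⟩ := pgl_pow_scalar h 2 hl2
  have sq_eig : ∀ (M : Matrix (Fin 2) (Fin 2) ℂ) (e : ℂ) (v : Fin 2 → ℂ) (cc : ℂ),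
      M.mulVec v = e • v → M ^ 2 = cc • 1 → v ≠ 0 → e ^ 2 = cc := by
    intro M e v cc hev hMsq hv
    have h1 : (M ^ 2).mulVec v = (e ^ 2) • v := by
      rw [pow_two, ← Matrix.mulVec_mulVec, hev, Matrix.mulVec_smul, hev, smul_smul, ← pow_two]
    rw [hMsq, Matrix.smul_mulVec, Matrix.one_mulVec] at h1
    have h2 : (cc - e ^ 2) • v = 0 := by rw [sub_smul, h1, sub_self]
    rcases smul_eq_zero.mp h2 with h3 | h3
    · exact (sub_eq_zero.mp h3).symm
    · exact absurd h3 hv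
  have ha2 : a ^ 2 = (c : ℂ) := sq_eig _ a u c hau hc p.rep_nonzero
  have hb2 : b ^ 2 = (c : ℂ) := sq_eig _ b w c hbw hc q.rep_nonzero
  have ha2' : a' ^ 2 = (c' : ℂ) := sq_eig _ a' u c' hau' hc' p.rep_nonzero
  have hb2' : b' ^ 2 = (c' : ℂ) := sq_eig _ b' w c' hbw' hc' q.rep_nonzero
  -- b = -a  (b = a impossible since g nonscalar)
  have hneg : ∀ (g' : GL2C) (aa bb : ℂ), (QuotientGroup.mk g' : PGL2C) ≠ 1 →
      (g' : Matrix (Fin 2) (Fin 2) ℂ).mulVec u = aa • u →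
      (g' : Matrix (Fin 2) (Fin 2) ℂ).mulVec w = bb • w →
      aa ^ 2 = bb ^ 2 → bb = -aa := by
    intro g' aa bb hne hgu hgw hsq
    have : (bb - aa) * (bb + aa) = 0 := by linear_combination -hsq
    rcases mul_eq_zero.mp this with h3 | h3
    · exfalso
      have heqa : bb = aa := sub_eq_zero.mp h3
      apply pgl_nonscalar g' hne aa
      apply matrix_eq_of_agree_basis hli
      · rw [hgu, Matrix.smul_mulVec, Matrix.one_mulVec]
      · rw [hgw, heqa, Matrix.smul_mulVec, Matrix.one_mulVec]
    · linear_combination h3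
  have hb_eq : b = -a := hneg g a b hk1 hau hbw (by rw [ha2, hb2])
  have hb_eq' : b' = -a' := hneg h a' b' hl1 hau' hbw' (by rw [ha2', hb2'])
  -- h = (a'/a) • g
  set r := a' / a with hr_def
  have hr0 : r ≠ 0 := div_ne_zero ha0' ha0
  have hmat : (h : Matrix (Fin 2) (Fin 2) ℂ) = (r • 1) * (g : Matrix (Fin 2) (Fin 2) ℂ) := by
    apply matrix_eq_of_agree_basis hli
    · rw [hau', ← Matrix.mulVec_mulVec, hau, Matrix.mulVec_smul, Matrix.smul_mulVec,
        Matrix.one_mulVec, smul_smul]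
      congr 1
      rw [hr_def]
      field_simp
    · rw [hbw', ← Matrix.mulVec_mulVec, hbw, Matrix.mulVec_smul, Matrix.smul_mulVec,
        Matrix.one_mulVec, smul_smul, hb_eq, hb_eq']
      congr 1
      rw [hr_def]
      field_simp
  -- conclude in PGL
  let z : GL2C := ⟨r • 1, r⁻¹ • 1,
    by rw [Matrix.smul_mul, Matrix.one_mul, smul_smul, mul_inv_cancel₀ hr0, one_smul],
    by rw [Matrix.smul_mul, Matrix.one_mul, smul_smul, inv_mul_cancel₀ hr0, one_smul]⟩
  have hz : h = z * g := by
    ext1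
    rw [Units.val_mul]
    exact hmat
  rw [hz, QuotientGroup.mk_mul, (QuotientGroup.eq_one_iff _).mpr (scalar_central z r rfl),
    one_mul]

-- INV: no two distinct involutions fixing a common point (with finite-order product)
lemma no_two_involutions {x : P1C} {k l : PGL2C} (hk1 : k ≠ 1) (hk2 : k ^ 2 = 1)
    (hl1 : l ≠ 1) (hl2 : l ^ 2 = 1) (hkl : k ≠ l) (hm12 : (k * l) ^ 12 = 1)
    (hkx : k • x = x) (hlx : l • x = x) : False := by
  have hkk : k * k = 1 := by rw [← pow_two]; exact hk2
  have hll : l * l = 1 := by rw [← pow_two]; exact hl2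
  set m := k * l with hm_def
  have hm1 : m ≠ 1 := by
    intro h
    apply hkl
    have h' : k * l = 1 := by rw [← hm_def]; exact h
    have : l = k⁻¹ := eq_inv_of_mul_eq_one_right h'
    rw [this, inv_eq_of_mul_eq_one_right hkk]
  obtain ⟨r, s, hrs, hchar⟩ := exists_two_fixed_points m hm1 hm12
  have hmx : m • x = x := by rw [hm_def, mul_smul, hlx, hkx]
  have hx_mem : x = r ∨ x = s := (hchar x).mp hmx
  -- j preserves {r, s} when j * m * j = m⁻¹
  have claim : ∀ j : PGL2C, j * j = 1 → j • x = x → j * m * j = m⁻¹ → j • r = r ∧ j • s = s := by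
    intro j hjj hjx hconj
    have hmj : ∀ z : P1C, m • z = z → m • (j • z) = j • z := by
      intro z hz
      have h1 : m * j = j * m⁻¹ := by
        have h2 : j * (j * m * j) * j = j * m⁻¹ * j := by rw [hconj]
        have h3 : m = j * m⁻¹ * j := by
          calc m = (j * j) * m * (j * j) := by rw [hjj, one_mul, mul_one]
          _ = j * (j * m * j) * j := by group
          _ = j * m⁻¹ * j := by rw [hconj]
        calc m * j = (j * m⁻¹ * j) * j := by rw [← h3]
        _ = j * m⁻¹ * (j * j) := by group
        _ = j * m⁻¹ := by rw [hjj, mul_one]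
      calc m • (j • z) = (m * j) • z := (mul_smul m j z).symm
      _ = (j * m⁻¹) • z := by rw [h1]
      _ = j • (m⁻¹ • z) := mul_smul j m⁻¹ z
      _ = j • z := by rw [inv_smul_eq_iff.mpr hz.symm]
    have hjr : j • r = r ∨ j • r = s := (hchar (j • r)).mp (hmj r ((hchar r).mpr (Or.inl rfl)))
    have hjs : j • s = r ∨ j • s = s := (hchar (j • s)).mp (hmj s ((hchar s).mpr (Or.inr rfl)))
    have hj_inj : ∀ z z' : P1C, j • z = j • z' → z = z' := by
      intro z z' h
      have := congrArg (fun y => j • y) h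
      simpa [← mul_smul, hjj] using this
    rcases hx_mem with hx | hx
    · -- x = r
      have h1 : j • r = r := by rw [← hx]; exact hjx
      rcases hjs with h2 | h2
      · exact absurd (hj_inj s r (h2.trans h1.symm)) fun hh => hrs hh.symm
      · exact ⟨h1, h2⟩
    · -- x = s
      have h1 : j • s = s := by rw [← hx]; exact hjx
      rcases hjr with h2 | h2
      · exact ⟨h2, h1⟩
      · exact absurd (hj_inj r s (h2.trans h1.symm)) hrs
  have hconj_k : k * m * k = m⁻¹ := by
    rw [hm_def, mul_inv_rev, inv_eq_of_mul_eq_one_right hkk, inv_eq_of_mul_eq_one_right hll]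
    calc k * (k * l) * k = (k * k) * (l * k) := by group
    _ = l * k := by rw [hkk, one_mul]
  have hconj_l : l * m * l = m⁻¹ := by
    rw [hm_def, mul_inv_rev, inv_eq_of_mul_eq_one_right hkk, inv_eq_of_mul_eq_one_right hll]
    calc l * (k * l) * l = (l * k) * (l * l) := by group
    _ = l * k := by rw [hll, mul_one]
  obtain ⟨hkr, hks⟩ := claim k hkk hkx hconj_k
  obtain ⟨hlr, hls⟩ := claim l hll hlx hconj_l
  exact hkl (involution_eq_of_two_fixed hrs hk1 hk2 hl1 hl2 hkr hks hlr hls)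

section A4

variable (φ : alternatingGroup (Fin 4) →* PGL2C) (hφ : Function.Injective φ)

lemma A4_small_pow : ∀ σ : alternatingGroup (Fin 4), σ ^ 2 = 1 ∨ σ ^ 3 = 1 := by decide

lemma card_A4 : Nat.card (alternatingGroup (Fin 4)) = 12 := by
  have h := two_mul_card_alternatingGroup (α := Fin 4)
  rw [Fintype.card_perm, Fintype.card_fin] at h
  have h4 : Nat.factorial 4 = 24 := rfl
  rw [h4] at h
  rw [Nat.card_eq_fintype_card]
  omega

lemma card_range (hφ : Function.Injective φ) : Nat.card φ.range = 12 := by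
  rw [← card_A4]
  exact Nat.card_congr (MonoidHom.ofInjective hφ).toEquiv.symm

lemma range_finite (hφ : Function.Injective φ) : Finite φ.range := by
  have : Nat.card φ.range = 12 := card_range φ hφ
  exact Nat.finite_of_card_ne_zero (by omega)

lemma range_small_pow {k : PGL2C} (hk : k ∈ φ.range) : k ^ 2 = 1 ∨ k ^ 3 = 1 := by
  obtain ⟨σ, rfl⟩ := hk
  rcases A4_small_pow σ with h | h
  · left; rw [← map_pow, h, map_one]
  · right; rw [← map_pow, h, map_one]

lemma range_pow12 {k : PGL2C} (hk : k ∈ φ.range) : k ^ 12 = 1 := by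
  rcases range_small_pow φ hk with h | h
  · rw [show (12 : ℕ) = 2 * 6 from rfl, pow_mul, h, one_pow]
  · rw [show (12 : ℕ) = 3 * 4 from rfl, pow_mul, h, one_pow]

end A4

section Stab

variable (φ : alternatingGroup (Fin 4) →* PGL2C)

/-- The joint-stabilizer subgroup of `x` inside the image of `φ`. -/
def stabSub (x : P1C) : Subgroup PGL2C := φ.range ⊓ MulAction.stabilizer PGL2C x

lemma mem_stabSub {x : P1C} {g : PGL2C} :
    g ∈ stabSub φ x ↔ g ∈ φ.range ∧ g • x = x := by
  rw [stabSub, Subgroup.mem_inf, MulAction.mem_stabilizer_iff]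

lemma stabSub_card (hφ : Function.Injective φ) (x : P1C) :
    Nat.card (stabSub φ x) = 1 ∨ Nat.card (stabSub φ x) = 2 ∨ Nat.card (stabSub φ x) = 3 := by
  classical
  haveI hKfin : Finite φ.range := range_finite φ hφ
  have hle : stabSub φ x ≤ φ.range := inf_le_left
  haveI hStfin : Finite (stabSub φ x) := by
    haveI : Finite (φ.range : Set PGL2C) := hKfin
    exact Finite.Set.subset _ hle
  haveI : Fintype (stabSub φ x) := Fintype.ofFinite _
  have hdvd : Nat.card (stabSub φ x) ∣ 12 := by
    rw [← card_range φ hφ]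
    exact Subgroup.card_dvd_of_le hle
  have hpos : 0 < Nat.card (stabSub φ x) := Nat.card_pos
  -- no element of order different from 1, 2, 3
  have hord : ∀ g : PGL2C, g ∈ stabSub φ x → g ^ 2 = 1 ∨ g ^ 3 = 1 := fun g hg =>
    range_small_pow φ ((mem_stabSub φ).mp hg).1
  -- distinct involutions in the stabilizer are impossible
  have hinv : ∀ k l : PGL2C, k ∈ stabSub φ x → l ∈ stabSub φ x →
      k ≠ 1 → k ^ 2 = 1 → l ≠ 1 → l ^ 2 = 1 → k ≠ l → False := by
    intro k l hk hl hk1 hk2 hl1 hl2 hkl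
    have hkK := ((mem_stabSub φ).mp hk).1
    have hlK := ((mem_stabSub φ).mp hl).1
    exact no_two_involutions hk1 hk2 hl1 hl2 hkl
      (range_pow12 φ (Subgroup.mul_mem _ hkK hlK))
      ((mem_stabSub φ).mp hk).2 ((mem_stabSub φ).mp hl).2
  set n := Nat.card (stabSub φ x) with hn
  have hcases : n = 1 ∨ n = 2 ∨ n = 3 ∨ n = 4 ∨ n = 6 ∨ n = 12 := by
    have hmem : n ∈ Nat.divisors 12 := Nat.mem_divisors.mpr ⟨hdvd, by norm_num⟩
    have hdiv : Nat.divisors 12 = {1, 2, 3, 4, 6, 12} := by decide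
    rw [hdiv] at hmem
    simpa using hmem
  rcases hcases with h | h | h | h | h | h
  · exact Or.inl h
  · exact Or.inr (Or.inl h)
  · exact Or.inr (Or.inr h)
  · -- card 4 : all nontrivial elements are involutions, two distinct ones exist
    exfalso
    have hsq : ∀ g : PGL2C, g ∈ stabSub φ x → g ≠ 1 → g ^ 2 = 1 := by
      intro g hg hg1
      rcases hord g hg with h2 | h3
      · exact h2
      · exfalso
        have ho3 : orderOf (⟨g, hg⟩ : stabSub φ x) ∣ 3 := by
          rw [← Subgroup.orderOf_coe]
          exact orderOf_dvd_of_pow_eq_one h3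
        have ho4 : orderOf (⟨g, hg⟩ : stabSub φ x) ∣ 4 := by
          rw [← h]; exact orderOf_dvd_natCard _
        have : orderOf (⟨g, hg⟩ : stabSub φ x) ∣ 1 := Nat.dvd_gcd ho3 ho4
        have hgone : (⟨g, hg⟩ : stabSub φ x) = 1 := by
          rw [← pow_one (⟨g, hg⟩ : stabSub φ x)]
          exact orderOf_dvd_iff_pow_eq_one.mp this
        exact hg1 (congrArg Subtype.val hgone)
    -- two distinct nontrivial elements
    have hcard3 : 2 ≤ (Finset.univ.erase (1 : stabSub φ x)).card := by
      have : Fintype.card (stabSub φ x) = 4 := by rw [← Nat.card_eq_fintype_card, ← hn, h]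
      rw [Finset.card_erase_of_mem (Finset.mem_univ _), Finset.card_univ, this]
      omega
    obtain ⟨a, ha, b, hb, hab⟩ := Finset.one_lt_card.mp (by omega : 1 < (Finset.univ.erase (1 : stabSub φ x)).card)
    have ha1 : a ≠ 1 := Finset.ne_of_mem_erase ha
    have hb1 : b ≠ 1 := Finset.ne_of_mem_erase hb
    have ha1' : (a : PGL2C) ≠ 1 := fun hh => ha1 (Subtype.ext hh)
    have hb1' : (b : PGL2C) ≠ 1 := fun hh => hb1 (Subtype.ext hh)
    have hab' : (a : PGL2C) ≠ (b : PGL2C) := fun hh => hab (Subtype.ext hh)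
    exact hinv a b a.2 b.2 ha1' (hsq a a.2 ha1') hb1' (hsq b b.2 hb1') hab'
  · -- card 6 : Cauchy gives an involution and an order-3 element
    exfalso
    have hc2 : (2 : ℕ).Prime := Nat.prime_two
    have hc3 : (3 : ℕ).Prime := Nat.prime_three
    haveI f2 : Fact (2 : ℕ).Prime := ⟨hc2⟩
    haveI f3 : Fact (3 : ℕ).Prime := ⟨hc3⟩
    have hft : Fintype.card (stabSub φ x) = 6 := by rw [← Nat.card_eq_fintype_card, ← hn, h]
    obtain ⟨κ, hκ⟩ := exists_prime_orderOf_dvd_card 2 (by rw [hft]; norm_num)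
    obtain ⟨μ, hμ⟩ := exists_prime_orderOf_dvd_card 3 (by rw [hft]; norm_num)
    set k := (κ : PGL2C) with hk_def
    set l := (μ : PGL2C) with hl_def
    have hok : orderOf k = 2 := by rw [hk_def, Subgroup.orderOf_coe, hκ]
    have hol : orderOf l = 3 := by rw [hl_def, Subgroup.orderOf_coe, hμ]
    have hk2 : k ^ 2 = 1 := by
      have hh := pow_orderOf_eq_one k
      rwa [hok] at hh
    have hl3 : l ^ 3 = 1 := by
      have hh := pow_orderOf_eq_one l
      rwa [hol] at hh
    have hk1 : k ≠ 1 := by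
      intro h0; rw [h0] at hok; simp at hok
    have hl1 : l ≠ 1 := by
      intro h0; rw [h0] at hol; simp at hol
    have hkSt : k ∈ stabSub φ x := κ.2
    have hlSt : l ∈ stabSub φ x := μ.2
    have hk'St : l * k * l⁻¹ ∈ stabSub φ x :=
      Subgroup.mul_mem _ (Subgroup.mul_mem _ hlSt hkSt) (Subgroup.inv_mem _ hlSt)
    by_cases hcomm : l * k * l⁻¹ = k
    · -- commuting: product has order 6
      have hcom : Commute k l := by
        have : l * k = k * l := by
          have := congrArg (fun y => y * l) hcomm
          simpa [mul_assoc] using this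
        exact this.symm
      have ho6 : orderOf (k * l) = 6 := by
        rw [hcom.orderOf_mul_eq_mul_orderOf_of_coprime (by rw [hok, hol]; norm_num), hok, hol]
      have hklSt : k * l ∈ stabSub φ x := Subgroup.mul_mem _ hkSt hlSt
      rcases hord (k * l) hklSt with h2 | h3
      · have := orderOf_dvd_of_pow_eq_one h2
        rw [ho6] at this
        norm_num at this
      · have := orderOf_dvd_of_pow_eq_one h3
        rw [ho6] at this
        norm_num at this
    · -- non-commuting: two distinct involutions
      have hk'2 : (l * k * l⁻¹) ^ 2 = 1 := by
        have heq : (l * k * l⁻¹) ^ 2 = l * k ^ 2 * l⁻¹ := by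
          rw [pow_two, pow_two]
          simp [mul_assoc]
        rw [heq, hk2, mul_one, mul_inv_cancel]
      have hk'1 : l * k * l⁻¹ ≠ 1 := by
        intro h0
        apply hk1
        have := congrArg (fun y => l⁻¹ * y * l) h0
        simpa [mul_assoc] using this
      exact hinv (l * k * l⁻¹) k hk'St hkSt hk'1 hk'2 hk1 hk2 hcomm
  · -- card 12 : stabilizer is everything; use two involutions of A₄
    exfalso
    haveI : Finite ((φ.range : Set PGL2C) : Type) := hKfin
    have hKset : (stabSub φ x : Set PGL2C) = (φ.range : Set PGL2C) := by
      apply Set.eq_of_subset_of_ncard_le (by exact_mod_cast hle) ?_ (Set.toFinite _)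
      have h1 : (φ.range : Set PGL2C).ncard = 12 := by
        rw [← Nat.card_coe_set_eq]
        exact card_range φ hφ
      have h2 : (stabSub φ x : Set PGL2C).ncard = 12 := by
        rw [← Nat.card_coe_set_eq]
        exact h
      omega
    have hσm : (Equiv.swap (0 : Fin 4) 1 * Equiv.swap 2 3) ∈ alternatingGroup (Fin 4) := by
      rw [Equiv.Perm.mem_alternatingGroup]; decide
    have hτm : (Equiv.swap (0 : Fin 4) 2 * Equiv.swap 1 3) ∈ alternatingGroup (Fin 4) := by
      rw [Equiv.Perm.mem_alternatingGroup]; decide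
    obtain ⟨a, ha_val⟩ : ∃ a : alternatingGroup (Fin 4),
        (a : Equiv.Perm (Fin 4)) = Equiv.swap 0 1 * Equiv.swap 2 3 := ⟨⟨_, hσm⟩, rfl⟩
    obtain ⟨b, hb_val⟩ : ∃ b : alternatingGroup (Fin 4),
        (b : Equiv.Perm (Fin 4)) = Equiv.swap 0 2 * Equiv.swap 1 3 := ⟨⟨_, hτm⟩, rfl⟩
    have ha2 : a ^ 2 = 1 := by
      rw [Subtype.ext_iff]
      push_cast
      rw [ha_val]
      decide
    have hb2 : b ^ 2 = 1 := by
      rw [Subtype.ext_iff]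
      push_cast
      rw [hb_val]
      decide
    have ha1 : a ≠ 1 := by
      intro h0
      have h1 := congrArg (Subtype.val) h0
      rw [ha_val] at h1
      exact absurd h1 (by decide)
    have hb1 : b ≠ 1 := by
      intro h0
      have h1 := congrArg (Subtype.val) h0
      rw [hb_val] at h1
      exact absurd h1 (by decide)
    have hab : a ≠ b := by
      intro h0
      have h1 := congrArg (Subtype.val) h0
      rw [ha_val, hb_val] at h1
      exact absurd h1 (by decide)
    have hmem : ∀ γ : alternatingGroup (Fin 4), φ γ ∈ stabSub φ x := by
      intro γ
      have : φ γ ∈ (φ.range : Set PGL2C) := ⟨γ, rfl⟩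
      rwa [← hKset] at this
    apply hinv (φ a) (φ b) (hmem a) (hmem b)
    · intro h0
      exact ha1 (hφ (by rw [h0, map_one]))
    · rw [← map_pow, ha2, map_one]
    · intro h0
      exact hb1 (hφ (by rw [h0, map_one]))
    · rw [← map_pow, hb2, map_one]
    · intro h0
      exact hab (hφ h0)

end Stab

section Orbits

variable (φ : alternatingGroup (Fin 4) →* PGL2C)

lemma orbitOf_eq (x : P1C) : orbitOf φ x = MulAction.orbit φ.range x := by
  ext y
  constructor
  · rintro ⟨g, hg, rfl⟩
    have hg' : (QuotientGroup.mk g : PGL2C) ∈ φ.range := hg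
    exact ⟨⟨QuotientGroup.mk g, hg'⟩, rfl⟩
  · rintro ⟨⟨k, hk⟩, rfl⟩
    obtain ⟨g, rfl⟩ := QuotientGroup.mk_surjective k
    exact ⟨g, hk, rfl⟩

lemma mem_orbitOf_self (x : P1C) : x ∈ orbitOf φ x := by
  rw [orbitOf_eq]
  exact MulAction.mem_orbit_self x

lemma orbitOf_eq_of_mem {x y : P1C} (h : y ∈ orbitOf φ x) : orbitOf φ y = orbitOf φ x := by
  rw [orbitOf_eq] at h ⊢
  rw [orbitOf_eq]
  exact MulAction.orbit_eq_iff.mpr h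

lemma card_stabilizer_eq (x : P1C) :
    Nat.card (MulAction.stabilizer φ.range x) = Nat.card (stabSub φ x) := by
  apply Nat.card_congr
  refine ⟨fun κ => ⟨κ.1.1, (mem_stabSub φ).mpr ⟨κ.1.2, κ.2⟩⟩,
    fun g => ⟨⟨g.1, ((mem_stabSub φ).mp g.2).1⟩, ?_⟩, fun κ => rfl, fun g => rfl⟩
  exact ((mem_stabSub φ).mp g.2).2

lemma orbit_mul_stab_card (hφ : Function.Injective φ) (x : P1C) :
    (orbitOf φ x).ncard * Nat.card (stabSub φ x) = 12 := by
  haveI : Finite φ.range := range_finite φ hφ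
  have h1 : (orbitOf φ x).ncard = Nat.card (MulAction.orbit φ.range x) := by
    rw [orbitOf_eq, ← Nat.card_coe_set_eq]
  have h2 : Nat.card (MulAction.orbit φ.range x) =
      Nat.card (φ.range ⧸ MulAction.stabilizer φ.range x) :=
    Nat.card_congr (MulAction.orbitEquivQuotientStabilizer φ.range x)
  have h3 := Subgroup.card_eq_card_quotient_mul_card_subgroup
    (MulAction.stabilizer φ.range x)
  rw [card_range φ hφ] at h3
  rw [h1, h2, ← card_stabilizer_eq φ x]
  omega

lemma stab_pos (hφ : Function.Injective φ) (x : P1C) : 0 < Nat.card (stabSub φ x) := by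
  haveI : Finite φ.range := range_finite φ hφ
  haveI : Finite (stabSub φ x) := by
    haveI : Finite (φ.range : Set PGL2C) := range_finite φ hφ
    exact Finite.Set.subset _ (inf_le_left : stabSub φ x ≤ φ.range)
  exact Nat.card_pos

lemma orbit_card_cases (hφ : Function.Injective φ) (x : P1C) :
    (orbitOf φ x).ncard = 4 ∧ Nat.card (stabSub φ x) = 3 ∨
    (orbitOf φ x).ncard = 6 ∧ Nat.card (stabSub φ x) = 2 ∨
    (orbitOf φ x).ncard = 12 ∧ Nat.card (stabSub φ x) = 1 := by
  have h1 := orbit_mul_stab_card φ hφ x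
  rcases stabSub_card φ hφ x with h | h | h <;> rw [h] at h1 ⊢ <;> omega

end Orbits

/-- For an injective homomorphism `φ : A₄ → PGL(2, ℂ)` and the induced action of `A₄` on
`ℙ¹(ℂ)`: every orbit has cardinality `4`, `6`, or `12`; there are exactly two orbits of
cardinality `4` and exactly one orbit of cardinality `6`. -/
theorem A4_orbits_on_P1 (φ : alternatingGroup (Fin 4) →* PGL2C)
    (hφ : Function.Injective φ) :
    (∀ x : P1C, (orbitOf φ x).ncard = 4 ∨ (orbitOf φ x).ncard = 6 ∨
      (orbitOf φ x).ncard = 12) ∧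
    {O : Set P1C | (∃ x : P1C, O = orbitOf φ x) ∧ O.ncard = 4}.ncard = 2 ∧
    {O : Set P1C | (∃ x : P1C, O = orbitOf φ x) ∧ O.ncard = 6}.ncard = 1 := by
  classical
  haveI hKfin : Finite φ.range := range_finite φ hφ
  haveI : Fintype φ.range := Fintype.ofFinite _
  haveI hstfin : ∀ z : P1C, Finite (stabSub φ z) := by
    intro z
    haveI : Finite (φ.range : Set PGL2C) := hKfin
    exact Finite.Set.subset _ (inf_le_left : stabSub φ z ≤ φ.range)
  have hprod : ∀ z : P1C, (orbitOf φ z).ncard * Nat.card (stabSub φ z) = 12 :=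
    orbit_mul_stab_card φ hφ
  have hcas : ∀ z : P1C, Nat.card (stabSub φ z) = 1 ∨ Nat.card (stabSub φ z) = 2 ∨
      Nat.card (stabSub φ z) = 3 := stabSub_card φ hφ
  have part1 : ∀ x : P1C, (orbitOf φ x).ncard = 4 ∨ (orbitOf φ x).ncard = 6 ∨
      (orbitOf φ x).ncard = 12 := by
    intro x
    have h1 := hprod x
    rcases hcas x with h | h | h <;> rw [h] at h1 <;> omega
  have horb4 : ∀ z : P1C, (orbitOf φ z).ncard = 4 ↔ Nat.card (stabSub φ z) = 3 := by
    intro z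
    have h1 := hprod z
    rcases hcas z with h | h | h <;> rw [h] at h1 ⊢ <;> omega
  have horb6 : ∀ z : P1C, (orbitOf φ z).ncard = 6 ↔ Nat.card (stabSub φ z) = 2 := by
    intro z
    have h1 := hprod z
    rcases hcas z with h | h | h <;> rw [h] at h1 ⊢ <;> omega
  -- the set of points with nontrivial stabilizer
  set S : Set P1C := {z | ∃ k : PGL2C, k ∈ φ.range ∧ k ≠ 1 ∧ k • z = z} with hS_def
  have hmemS : ∀ z : P1C, z ∈ S ↔ 2 ≤ Nat.card (stabSub φ z) := by
    intro z
    constructor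
    · rintro ⟨k, hk, hk1, hkz⟩
      exact Finite.one_lt_card_iff_nontrivial.mpr
        ⟨⟨k, (mem_stabSub φ).mpr ⟨hk, hkz⟩⟩, 1, fun hh => hk1 (congrArg Subtype.val hh)⟩
    · intro h2
      obtain ⟨a, b, hab⟩ := Finite.one_lt_card_iff_nontrivial.mp h2
      by_cases ha : a = 1
      · refine ⟨(b : PGL2C), ((mem_stabSub φ).mp b.2).1, ?_, ((mem_stabSub φ).mp b.2).2⟩
        intro hh
        exact hab (ha.trans (Subtype.ext hh).symm)
      · refine ⟨(a : PGL2C), ((mem_stabSub φ).mp a.2).1, ?_, ((mem_stabSub φ).mp a.2).2⟩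
        intro hh
        exact ha (Subtype.ext hh)
  have hSfin : S.Finite := by
    have hsub : S ⊆ ⋃ κ : {k : φ.range // (k : PGL2C) ≠ 1},
        {z : P1C | (κ.1 : PGL2C) • z = z} := by
      rintro z ⟨k, hk, hk1, hkz⟩
      exact Set.mem_iUnion.mpr ⟨⟨⟨k, hk⟩, hk1⟩, hkz⟩
    refine Set.Finite.subset (Set.finite_iUnion fun κ => ?_) hsub
    obtain ⟨p, q, hpq, hchar⟩ := exists_two_fixed_points (κ.1 : PGL2C) κ.2
      (range_pow12 φ κ.1.2)
    have hset : {z : P1C | (κ.1 : PGL2C) • z = z} = {p, q} := by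
      ext z
      simp only [Set.mem_setOf_eq, Set.mem_insert_iff, Set.mem_singleton_iff]
      exact hchar z
    rw [hset]
    exact (Set.finite_singleton q).insert p
  set T : Finset P1C := hSfin.toFinset with hT_def
  have hmemT : ∀ z : P1C, z ∈ T ↔ z ∈ S := fun z => Set.Finite.mem_toFinset hSfin
  set D : Finset φ.range := Finset.univ.erase 1 with hD_def
  have hDcard : D.card = 11 := by
    rw [hD_def, Finset.card_erase_of_mem (Finset.mem_univ _), Finset.card_univ]
    have : Fintype.card φ.range = 12 := by
      rw [← Nat.card_eq_fintype_card]; exact card_range φ hφ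
    omega
  -- the double count
  have hswap : ∑ k ∈ D, (T.filter (fun z => (k : PGL2C) • z = z)).card
      = ∑ z ∈ T, (D.filter (fun k : φ.range => (k : PGL2C) • z = z)).card := by
    simp only [Finset.card_filter]
    exact Finset.sum_comm
  have hLHS : ∑ k ∈ D, (T.filter (fun z => (k : PGL2C) • z = z)).card = 22 := by
    have hterm : ∀ k ∈ D, (T.filter (fun z => (k : PGL2C) • z = z)).card = 2 := by
      intro k hkD
      have hk1 : (k : PGL2C) ≠ 1 := by
        have h := Finset.ne_of_mem_erase hkD
        exact fun hh => h (Subtype.ext hh)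
      obtain ⟨p, q, hpq, hchar⟩ := exists_two_fixed_points (k : PGL2C) hk1
        (range_pow12 φ k.2)
      have hflt : T.filter (fun z => (k : PGL2C) • z = z) = {p, q} := by
        ext z
        simp only [Finset.mem_filter, Finset.mem_insert, Finset.mem_singleton]
        constructor
        · rintro ⟨_, hfix⟩
          exact (hchar z).mp hfix
        · intro hz
          refine ⟨(hmemT z).mpr ⟨(k : PGL2C), k.2, hk1, (hchar z).mpr hz⟩, (hchar z).mpr hz⟩
      rw [hflt, Finset.card_pair hpq]
    rw [Finset.sum_congr rfl hterm, Finset.sum_const, hDcard, smul_eq_mul]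
  have hstab_count : ∀ z : P1C,
      (D.filter (fun k : φ.range => (k : PGL2C) • z = z)).card = Nat.card (stabSub φ z) - 1 := by
    intro z
    have h1 : D.filter (fun k : φ.range => (k : PGL2C) • z = z)
        = (Finset.univ.filter (fun k : φ.range => (k : PGL2C) • z = z)).erase 1 := by
      ext k
      simp only [hD_def, Finset.mem_filter, Finset.mem_erase, Finset.mem_univ, true_and,
        and_true]
      try tauto
    have h2 : (Finset.univ.filter (fun k : φ.range => (k : PGL2C) • z = z)).card
        = Nat.card (stabSub φ z) := by
      rw [← Fintype.card_subtype, ← Nat.card_eq_fintype_card]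
      apply Nat.card_congr
      exact ⟨fun κ => ⟨κ.1.1, (mem_stabSub φ).mpr ⟨κ.1.2, κ.2⟩⟩,
        fun g => ⟨⟨g.1, ((mem_stabSub φ).mp g.2).1⟩, ((mem_stabSub φ).mp g.2).2⟩,
        fun κ => rfl, fun g => rfl⟩
    rw [h1, Finset.card_erase_of_mem, h2]
    exact Finset.mem_filter.mpr ⟨Finset.mem_univ _, one_smul _ z⟩
  set T4 : Finset P1C := T.filter (fun z => Nat.card (stabSub φ z) = 3) with hT4_def
  set T6 : Finset P1C := T.filter (fun z => ¬ Nat.card (stabSub φ z) = 3) with hT6_def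
  have hRHS : ∑ z ∈ T, (D.filter (fun k : φ.range => (k : PGL2C) • z = z)).card
      = 2 * T4.card + T6.card := by
    have h0 : ∀ z ∈ T, (D.filter (fun k : φ.range => (k : PGL2C) • z = z)).card
        = Nat.card (stabSub φ z) - 1 := fun z _ => hstab_count z
    rw [Finset.sum_congr rfl h0,
      ← Finset.sum_filter_add_sum_filter_not T (fun z => Nat.card (stabSub φ z) = 3)]
    have h4 : ∀ z ∈ T4, Nat.card (stabSub φ z) - 1 = 2 := by
      intro z hz
      rw [(Finset.mem_filter.mp hz).2]
    have h6 : ∀ z ∈ T6, Nat.card (stabSub φ z) - 1 = 1 := by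
      intro z hz
      obtain ⟨hzT, hz3⟩ := Finset.mem_filter.mp hz
      have h2 := (hmemS z).mp ((hmemT z).mp hzT)
      rcases hcas z with h | h | h
      · omega
      · rw [h]
      · exact absurd h hz3
    rw [Finset.sum_congr rfl h4, Finset.sum_congr rfl h6, Finset.sum_const,
      Finset.sum_const]
    simp only [smul_eq_mul, mul_one]
    omega
  have hcount : 2 * T4.card + T6.card = 22 := by rw [← hRHS, ← hswap, hLHS]
  -- membership in T4 / T6 via orbit sizes
  have hmemT4 : ∀ z : P1C, z ∈ T4 ↔ (orbitOf φ z).ncard = 4 := by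
    intro z
    rw [hT4_def, Finset.mem_filter, horb4]
    constructor
    · exact fun h => h.2
    · intro h
      exact ⟨(hmemT z).mpr ((hmemS z).mpr (by omega)), h⟩
  have hmemT6 : ∀ z : P1C, z ∈ T6 ↔ (orbitOf φ z).ncard = 6 := by
    intro z
    rw [hT6_def, Finset.mem_filter, horb6]
    constructor
    · rintro ⟨hzT, hz3⟩
      have h2 := (hmemS z).mp ((hmemT z).mp hzT)
      rcases hcas z with h | h | h
      · omega
      · exact h
      · exact absurd h hz3
    · intro h
      refine ⟨(hmemT z).mpr ((hmemS z).mpr (by omega)), by omega⟩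
  -- group the points by orbits
  have hfiber : ∀ (Tn : Finset P1C) (d : ℕ), (∀ z : P1C, z ∈ Tn ↔ (orbitOf φ z).ncard = d) →
      (∀ O ∈ Tn.image (fun z => orbitOf φ z),
        (Tn.filter (fun z => orbitOf φ z = O)).card = d) := by
    intro Tn d hmem O hO
    obtain ⟨z₀, hz₀, rfl⟩ := Finset.mem_image.mp hO
    have hcoe : (↑(Tn.filter (fun z => orbitOf φ z = orbitOf φ z₀)) : Set P1C)
        = orbitOf φ z₀ := by
      ext y
      simp only [Finset.coe_filter, Set.mem_setOf_eq]
      constructor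
      · rintro ⟨hyT, hy⟩
        rw [← hy]
        exact mem_orbitOf_self φ y
      · intro hy
        have he := orbitOf_eq_of_mem φ hy
        refine ⟨(hmem y).mpr ?_, he⟩
        rw [he]
        exact (hmem z₀).mp hz₀
    have := congrArg Set.ncard hcoe
    rwa [Set.ncard_coe_finset, (hmem z₀).mp hz₀] at this
  have hbatch : ∀ (Tn : Finset P1C) (d : ℕ), (∀ z : P1C, z ∈ Tn ↔ (orbitOf φ z).ncard = d) →
      Tn.card = d * (Tn.image (fun z => orbitOf φ z)).card := by
    intro Tn d hmem
    rw [Finset.card_eq_sum_card_image (fun z => orbitOf φ z) Tn,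
      Finset.sum_congr rfl (hfiber Tn d hmem), Finset.sum_const, smul_eq_mul, mul_comm]
  have hT4card := hbatch T4 4 hmemT4
  have hT6card := hbatch T6 6 hmemT6
  -- identify the orbit sets
  have hAset : {O : Set P1C | (∃ x : P1C, O = orbitOf φ x) ∧ O.ncard = 4}
      = ↑(T4.image (fun z => orbitOf φ z)) := by
    ext O
    simp only [Set.mem_setOf_eq, Finset.coe_image, Set.mem_image, Finset.mem_coe]
    constructor
    · rintro ⟨⟨x, rfl⟩, h4⟩
      exact ⟨x, (hmemT4 x).mpr h4, rfl⟩
    · rintro ⟨z, hz, rfl⟩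
      exact ⟨⟨z, rfl⟩, (hmemT4 z).mp hz⟩
  have hBset : {O : Set P1C | (∃ x : P1C, O = orbitOf φ x) ∧ O.ncard = 6}
      = ↑(T6.image (fun z => orbitOf φ z)) := by
    ext O
    simp only [Set.mem_setOf_eq, Finset.coe_image, Set.mem_image, Finset.mem_coe]
    constructor
    · rintro ⟨⟨x, rfl⟩, h6⟩
      exact ⟨x, (hmemT6 x).mpr h6, rfl⟩
    · rintro ⟨z, hz, rfl⟩
      exact ⟨⟨z, rfl⟩, (hmemT6 z).mp hz⟩
  refine ⟨part1, ?_, ?_⟩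
  · rw [hAset, Set.ncard_coe_finset]
    omega
  · rw [hBset, Set.ncard_coe_finset]
    omega

end
end
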